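/- arXiv:1407.1624 — 7 statements merged into one kernel-verified Lean document; each statement's English description precedes it below -/
import Mathlib

section
/- Let μ be a probability measure on [0,1]^2 whose pushforward under each coordinate projection v ↦ v_j (j = 1,2) is the uniform (Lebesgue) distribution on [0,1], and let C(u) = μ({v ∈ [0,1]^2 : v_1 ≤ u_1, v_2 ≤ u_2}). Then ∫_{[0,1]^2} C(u) du = ∫_{[0,1]^2} u_1 u_2 dμ(u); consequently the two expressions 12 ∫_{[0,1]^2} C(u) du − 3 and 12 ∫_{[0,1]^2} u_1 u_2 dμ(u) − 3 for Spearman's rho coincide. -/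
open MeasureTheory Set

/-! Write `C u = μ (Iic u)`. By Tonelli on `{(u, v) | v ≤ u}`, integrating `C` against the uniform
measure on the square equals integrating `v ↦ λ([0,1]² ∩ Ici v) = (1 - v₀)(1 - v₁)` against `μ`.
Expanding the product, the linear terms integrate to `1/2` each because the marginals are uniform,
leaving `∫ v₀ v₁ dμ`. -/

section OrderFubini

variable {α : Type*} [MeasurableSpace α] [TopologicalSpace α] [PartialOrder α]
  [OrderClosedTopology α] [SecondCountableTopology α] [OpensMeasurableSpace α]

theorem lintegral_measure_Iic_eq_lintegral_measure_Ici (μ ν : Measure α) [SFinite μ]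
    [SFinite ν] : ∫⁻ u, μ (Iic u) ∂ν = ∫⁻ v, ν (Ici v) ∂μ := by
  have hS : MeasurableSet {p : α × α | p.2 ≤ p.1} := measurableSet_le measurable_snd measurable_fst
  calc ∫⁻ u, μ (Iic u) ∂ν = ν.prod μ {p | p.2 ≤ p.1} := (Measure.prod_apply hS).symm
    _ = ∫⁻ v, ν (Ici v) ∂μ := Measure.prod_apply_symm hS

theorem integral_measure_Iic_eq_integral_measure_Ici (μ ν : Measure α) [IsFiniteMeasure μ]
    [IsFiniteMeasure ν] : ∫ u, (μ (Iic u)).toReal ∂ν = ∫ v, (ν (Ici v)).toReal ∂μ := by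
  have hS : MeasurableSet {p : α × α | p.2 ≤ p.1} := measurableSet_le measurable_snd measurable_fst
  have hIic : Measurable fun u => μ (Iic u) := measurable_measure_prodMk_left hS
  have hIci : Measurable fun v => ν (Ici v) := measurable_measure_prodMk_right hS
  rw [integral_toReal hIic.aemeasurable (ae_of_all _ fun _ => measure_lt_top _ _),
    integral_toReal hIci.aemeasurable (ae_of_all _ fun _ => measure_lt_top _ _),
    lintegral_measure_Iic_eq_lintegral_measure_Ici]

end OrderFubini

theorem volume_restrict_pi_Icc_Ici {ι : Type*} [Fintype ι] {v : ι → ℝ} (hv : 0 ≤ v) :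
    volume.restrict (univ.pi fun _ : ι => Icc (0 : ℝ) 1) (Ici v)
      = ∏ i, ENNReal.ofReal (1 - v i) := by
  rw [Measure.restrict_apply measurableSet_Ici, ← pi_univ_Ici, ← pi_inter_distrib, volume_pi_pi]
  refine Finset.prod_congr rfl fun i _ => ?_
  have hIcc : Ici (v i) ∩ Icc 0 1 = Icc (v i) 1 := by
    ext x
    simp only [mem_inter_iff, mem_Ici, mem_Icc]
    constructor
    · exact fun ⟨hvx, _, hx1⟩ => ⟨hvx, hx1⟩
    · exact fun ⟨hvx, hx1⟩ => ⟨hvx, (hv i).trans hvx, hx1⟩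
  rw [hIcc, Real.volume_Icc]

section UniformMarginal

variable {Ω : Type*} [MeasurableSpace Ω] {μ : Measure Ω}

theorem ae_mem_of_map_eq_restrict {β : Type*} [MeasurableSpace β] {f : Ω → β} {ν : Measure β}
    {s : Set β} (hf : AEMeasurable f μ) (hs : MeasurableSet s) (h : μ.map f = ν.restrict s) :
    ∀ᵐ ω ∂μ, f ω ∈ s :=
  (ae_map_iff hf hs).mp (h ▸ ae_restrict_mem hs)

variable {f g : Ω → ℝ}

theorem integrable_of_map_eq_uniform (hf : AEMeasurable f μ)
    (h : μ.map f = volume.restrict (Icc 0 1)) : Integrable f μ := by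
  have : Integrable id (μ.map f) := h ▸ continuous_id.integrableOn_Icc
  exact (integrable_map_measure aestronglyMeasurable_id hf).mp this

theorem integral_eq_half_of_map_eq_uniform (hf : AEMeasurable f μ)
    (h : μ.map f = volume.restrict (Icc 0 1)) : ∫ ω, f ω ∂μ = 1 / 2 := by
  calc ∫ ω, f ω ∂μ = ∫ x, x ∂(μ.map f) := (integral_map hf aestronglyMeasurable_id).symm
    _ = 1 / 2 := by
      rw [h, integral_Icc_eq_integral_Ioc,
        ← intervalIntegral.integral_of_le zero_le_one, integral_id]
      norm_num

theorem integral_one_sub_mul_one_sub_eq_integral_mul [IsProbabilityMeasure μ]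
    (hf : AEMeasurable f μ) (hg : AEMeasurable g μ)
    (hf_unif : μ.map f = volume.restrict (Icc 0 1))
    (hg_unif : μ.map g = volume.restrict (Icc 0 1)) :
    ∫ ω, (1 - f ω) * (1 - g ω) ∂μ = ∫ ω, f ω * g ω ∂μ := by
  have hfi := integrable_of_map_eq_uniform hf hf_unif
  have hgi := integrable_of_map_eq_uniform hg hg_unif
  have hfg : Integrable (fun ω => f ω * g ω) μ := by
    refine hgi.bdd_mul hf.aestronglyMeasurable (c := 1) ?_
    filter_upwards [ae_mem_of_map_eq_restrict hf measurableSet_Icc hf_unif] with ω hω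
    rw [Real.norm_eq_abs, abs_le]
    exact ⟨by linarith [hω.1], hω.2⟩
  have hexpand : (fun ω => (1 - f ω) * (1 - g ω)) = fun ω => 1 - f ω - g ω + f ω * g ω := by
    ext; ring
  have h1f : Integrable (fun ω => 1 - f ω) μ := (integrable_const 1).sub hfi
  have h1fg : Integrable (fun ω => 1 - f ω - g ω) μ := h1f.sub hgi
  rw [hexpand, integral_add h1fg hfg, integral_sub h1f hgi, integral_sub (integrable_const 1) hfi,
    integral_eq_half_of_map_eq_uniform hf hf_unif, integral_eq_half_of_map_eq_uniform hg hg_unif]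
  norm_num

end UniformMarginal

/-- For a bivariate copula measure `μ` with c.d.f. `C`, the two classical
expressions for Spearman's rho coincide:
`∫_{[0,1]^2} C(u) du = ∫ u₁u₂ dμ(u)`, hence
`12 ∫ C du - 3 = 12 ∫ u₁u₂ dμ - 3`. -/
theorem spearman_rho_two_expressions
    (μ : Measure (Fin 2 → ℝ)) [IsProbabilityMeasure μ]
    (hmarg : ∀ j : Fin 2, μ.map (fun v => v j) = volume.restrict (Set.Icc (0:ℝ) 1))
    (C : (Fin 2 → ℝ) → ℝ)
    (hC : ∀ u, C u = (μ {v | ∀ j, v j ≤ u j}).toReal) :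
    (∫ u in Set.univ.pi (fun _ : Fin 2 => Set.Icc (0:ℝ) 1), C u
        = ∫ u, u 0 * u 1 ∂μ) ∧
    (12 * (∫ u in Set.univ.pi (fun _ : Fin 2 => Set.Icc (0:ℝ) 1), C u) - 3
        = 12 * (∫ u, u 0 * u 1 ∂μ) - 3) := by
  have hcoord (j : Fin 2) : AEMeasurable (fun v : Fin 2 → ℝ => v j) μ :=
    (measurable_pi_apply j).aemeasurable
  have hbox : ∀ᵐ v ∂μ, v ∈ univ.pi fun _ : Fin 2 => Icc (0 : ℝ) 1 := by
    filter_upwards [ae_all_iff.2 fun j =>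
      ae_mem_of_map_eq_restrict (hcoord j) measurableSet_Icc (hmarg j)] with v hv
    exact mem_univ_pi.2 hv
  have : IsFiniteMeasure (volume.restrict (univ.pi fun _ : Fin 2 => Icc (0 : ℝ) 1)) :=
    isFiniteMeasure_restrict.2 (isCompact_univ_pi fun _ => isCompact_Icc).measure_lt_top.ne
  have key : ∫ u in univ.pi (fun _ : Fin 2 => Icc (0 : ℝ) 1), C u = ∫ u, u 0 * u 1 ∂μ := calc
    _ = ∫ u in univ.pi (fun _ : Fin 2 => Icc (0 : ℝ) 1), (μ (Iic u)).toReal := by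
      simp_rw [hC]; rfl
    _ = ∫ v, (volume.restrict (univ.pi fun _ : Fin 2 => Icc (0 : ℝ) 1) (Ici v)).toReal ∂μ :=
      integral_measure_Iic_eq_integral_measure_Ici μ _
    _ = ∫ v, (1 - v 0) * (1 - v 1) ∂μ := by
      refine integral_congr_ae ?_
      filter_upwards [hbox] with v hv
      simp only [mem_univ_pi, mem_Icc] at hv
      rw [volume_restrict_pi_Icc_Ici fun i => (hv i).1, ENNReal.toReal_prod, Fin.prod_univ_two,
        ENNReal.toReal_ofReal (by linarith [hv 0]), ENNReal.toReal_ofReal (by linarith [hv 1])]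
    _ = ∫ v, v 0 * v 1 ∂μ :=
      integral_one_sub_mul_one_sub_eq_integral_mul (hcoord 0) (hcoord 1) (hmarg 0) (hmarg 1)
  exact ⟨key, by rw [key]⟩
end

section
/- Let μ be a probability measure on [0,1]^d, C(u) = μ({v : v ≤ u componentwise}) its cumulative distribution function, and A ⊆ {1,…,d} nonempty. Define ψ_{μ,A}(g) = ∫_{[0,1]^d} g(u^A) du − ∫_{[0,1]^d} Σ_{j∈A} ∏_{l∈A\{j}} (1 − v_l) g(v^{{j}}) dμ(v) for bounded measurable g : [0,1]^d → ℝ, and I_{μ,A}(u) = ∏_{l∈A}(1 − u_l) − ∫_{[0,1]^d} Σ_{j∈A} ∏_{l∈A\{j}} (1 − v_l) 1(u_j ≤ v_j) dμ(v). Then ψ_{μ,A}(C) = ∫_{[0,1]^d} I_{μ,A}(u) dμ(u). -/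
/-!
Both terms of `ψ_{μ,A}(C)` are turned into `μ`-integrals by Fubini. Writing
`C(u^A) = μ{v ≤ u^A}` and exchanging the integrals, the first term becomes
`∫ λ{u ∈ [0,1]^d : v ≤ u^A} dμ(v) = ∫ ∏_{l ∈ A} (1 - v_l) dμ(v)`. Since `μ` lives on the cube,
`C(v^{{j}}) = μ{w : w_j ≤ v_j} = ∫ 1(w_j ≤ v_j) dμ(w)`, and exchanging the two `μ`-integrals
turns the second term into the double integral appearing in `∫ I_{μ,A} dμ`.
-/

open MeasureTheory Set

section Fubini

variable {α β : Type*} [MeasurableSpace α] [MeasurableSpace β]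
  {μ : Measure α} {ν : Measure β} [IsFiniteMeasure μ] [IsFiniteMeasure ν]

theorem integral_measureReal_prodMk_left_eq_right {s : Set (α × β)} (hs : MeasurableSet s) :
    ∫ x, ν.real (Prod.mk x ⁻¹' s) ∂μ = ∫ y, μ.real ((·, y) ⁻¹' s) ∂ν := by
  have hswap := integral_integral_swap (μ := μ) (ν := ν)
    (f := fun x y => s.indicator (1 : α × β → ℝ) (x, y)) ((integrable_const 1).indicator hs)
  have hleft (x : α) : ∫ y, s.indicator (1 : α × β → ℝ) (x, y) ∂ν = ν.real (Prod.mk x ⁻¹' s) :=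
    integral_indicator_one (measurable_prodMk_left hs)
  have hright (y : β) : ∫ x, s.indicator (1 : α × β → ℝ) (x, y) ∂μ = μ.real ((·, y) ⁻¹' s) :=
    integral_indicator_one (measurable_prodMk_right hs)
  simpa only [hleft, hright] using hswap

end Fubini

section MarginalKernel

variable {ι : Type*}

theorem ite_le_eval_eq_indicator (j : ι) (t : ℝ) :
    (fun u : ι → ℝ => if u j ≤ t then (1 : ℝ) else 0) = {w | w j ≤ t}.indicator 1 := by
  ext u
  simp [Set.indicator_apply]

theorem integral_ite_le_eval_eq_measureReal (ν : Measure (ι → ℝ)) (j : ι) (t : ℝ) :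
    ∫ u, (if u j ≤ t then (1 : ℝ) else 0) ∂ν = ν.real {w | w j ≤ t} := by
  rw [ite_le_eval_eq_indicator,
    integral_indicator_one (measurableSet_le (measurable_pi_apply j) measurable_const)]

theorem integrable_ite_le_eval {ν : Measure (ι → ℝ)} [IsFiniteMeasure ν] (j : ι) (t : ℝ) :
    Integrable (fun u : ι → ℝ => if u j ≤ t then (1 : ℝ) else 0) ν := by
  rw [ite_le_eval_eq_indicator]
  exact (integrable_const 1).indicator (measurableSet_le (measurable_pi_apply j) measurable_const)

theorem integrable_prod_one_sub {μ : Measure (ι → ℝ)} [IsFiniteMeasure μ]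
    (hμ : ∀ᵐ v ∂μ, v ∈ Icc 0 1) (B : Finset ι) :
    Integrable (fun v => ∏ l ∈ B, (1 - v l)) μ := by
  refine Integrable.of_bound (Finset.measurable_prod B fun l _ =>
    measurable_const.sub (measurable_pi_apply l)).aestronglyMeasurable 1 ?_
  filter_upwards [hμ] with v ⟨hv0, hv1⟩
  rw [norm_prod]
  refine Finset.prod_le_one (fun _ _ => norm_nonneg _) fun l _ => ?_
  have h0 : 0 ≤ v l := hv0 l
  have h1 : v l ≤ 1 := hv1 l
  rw [Real.norm_eq_abs, abs_le]
  constructor <;> linarith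

variable {μ ν : Measure (ι → ℝ)} [IsFiniteMeasure ν] (A : Finset ι) {f : ι → (ι → ℝ) → ℝ}

theorem integrable_sum_mul_ite_le (hf : ∀ j ∈ A, Integrable (f j) μ) :
    Integrable (Function.uncurry fun v u => ∑ j ∈ A, f j v * if u j ≤ v j then 1 else 0)
      (μ.prod ν) := by
  refine integrable_finsetSum A fun j hj => ((hf j hj).comp_fst ν).mul_bdd (c := 1) ?_ ?_
  · exact (Measurable.ite (measurableSet_le measurable_snd.eval measurable_fst.eval)
      measurable_const measurable_const).aestronglyMeasurable
  · refine Filter.Eventually.of_forall fun p => ?_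
    split_ifs <;> simp

theorem integral_sum_mul_measureReal_le_eq_integral_integral [IsFiniteMeasure μ]
    (hf : ∀ j ∈ A, Integrable (f j) μ) :
    ∫ v, ∑ j ∈ A, f j v * ν.real {w | w j ≤ v j} ∂μ
      = ∫ u, ∫ v, ∑ j ∈ A, f j v * (if u j ≤ v j then 1 else 0) ∂μ ∂ν := by
  rw [← integral_integral_swap (integrable_sum_mul_ite_le A hf)]
  refine integral_congr_ae (Filter.Eventually.of_forall fun v => ?_)
  dsimp only
  rw [integral_finsetSum]
  · simp only [integral_const_mul, integral_ite_le_eval_eq_measureReal]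
  · exact fun j _ => (integrable_ite_le_eval j (v j)).const_mul (f j v)

end MarginalKernel

section Orthants

variable {ι : Type*} [DecidableEq ι]

theorem measureReal_Iic_ite_eq {μ : Measure (ι → ℝ)} (hμ : ∀ᵐ w ∂μ, w ≤ 1) (j : ι) (t : ℝ) :
    μ.real (Iic fun l => if l = j then t else 1) = μ.real {w | w j ≤ t} := by
  refine measureReal_congr (Filter.eventuallyEq_set.2 ?_)
  filter_upwards [hμ] with w hw
  refine ⟨fun h => by simpa using h j, fun h l => ?_⟩
  by_cases hl : l = j
  · subst hl
    simpa using h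
  · simpa [hl] using hw l

theorem measurable_finset_piecewise_const {β : Type*} [MeasurableSpace β] (A : Finset ι)
    (c : ι → β) : Measurable fun u : ι → β => A.piecewise u c :=
  measurable_pi_lambda _ fun j => by
    by_cases hj : j ∈ A
    · simpa [Finset.piecewise, hj] using measurable_pi_apply j
    · simp [Finset.piecewise, hj]

theorem setOf_le_piecewise_inter_Icc {v : ι → ℝ} (hv : v ∈ Icc 0 1) (A : Finset ι) :
    {u | v ≤ A.piecewise u (1 : ι → ℝ)} ∩ Icc 0 1 = Icc (A.piecewise v 0) 1 := by
  obtain ⟨hv0, hv1⟩ := hv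
  simp only [Pi.le_def, Pi.zero_apply, Pi.one_apply] at hv0 hv1
  ext u
  simp only [mem_inter_iff, mem_ofPred_eq, mem_Icc, Pi.le_def, Finset.piecewise, Pi.zero_apply,
    Pi.one_apply]
  constructor
  · rintro ⟨hvu, hu0, hu1⟩
    refine ⟨fun j => ?_, hu1⟩
    have := hvu j
    split_ifs at this ⊢ <;> first | exact this | exact hu0 j
  · rintro ⟨hu0, hu1⟩
    refine ⟨fun j => ?_, fun j => ?_, hu1⟩
    · have := hu0 j
      split_ifs at this ⊢ <;> first | exact this | exact hv1 j
    · have := hu0 j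
      split_ifs at this <;> linarith [hv0 j]

theorem volume_real_setOf_le_piecewise_inter_Icc [Fintype ι] {v : ι → ℝ} (hv : v ∈ Icc 0 1)
    (A : Finset ι) :
    volume.real ({u | v ≤ A.piecewise u (1 : ι → ℝ)} ∩ Icc 0 1) = ∏ l ∈ A, (1 - v l) := by
  have hle : A.piecewise v 0 ≤ 1 := fun j => by
    by_cases hj : j ∈ A
    · simpa [hj] using hv.2 j
    · simp [hj]
  rw [setOf_le_piecewise_inter_Icc hv, measureReal_def, Real.volume_Icc_pi_toReal hle,
    ← Finset.prod_subset A.subset_univ]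
  · exact Finset.prod_congr rfl fun j hj => by simp [hj]
  · exact fun j _ hj => by simp [hj]

theorem setIntegral_Icc_measureReal_Iic_piecewise [Fintype ι] {μ : Measure (ι → ℝ)}
    [IsFiniteMeasure μ] (hμ : ∀ᵐ v ∂μ, v ∈ Icc 0 1) (A : Finset ι) :
    ∫ u in Icc 0 1, μ.real (Iic (A.piecewise u 1)) = ∫ v, ∏ l ∈ A, (1 - v l) ∂μ := by
  have hs : MeasurableSet {p : (ι → ℝ) × (ι → ℝ) | p.2 ≤ A.piecewise p.1 1} :=
    measurableSet_le measurable_snd ((measurable_finset_piecewise_const A 1).comp measurable_fst)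
  have : IsFiniteMeasure (volume.restrict (Icc (0 : ι → ℝ) 1)) :=
    isFiniteMeasure_restrict.2 isCompact_Icc.measure_ne_top
  refine (integral_measureReal_prodMk_left_eq_right hs).trans (integral_congr_ae ?_)
  filter_upwards [hμ] with v hv
  rw [measureReal_restrict_apply (measurable_prodMk_right hs)]
  exact volume_real_setOf_le_piecewise_inter_Icc hv A

end Orthants

theorem psi_of_cdf_eq_integral_I_general
    {d : ℕ}
    (μ : Measure (Fin d → ℝ)) [IsProbabilityMeasure μ]
    (hsupp : μ {v | ∀ j, v j ∈ Set.Icc (0:ℝ) 1} = 1)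
    (C : (Fin d → ℝ) → ℝ)
    (hC : ∀ u, C u = (μ {v | ∀ j, v j ≤ u j}).toReal)
    (A : Finset (Fin d)) :
    ((∫ u in Set.univ.pi (fun _ : Fin d => Set.Icc (0:ℝ) 1),
          C (fun j => if j ∈ A then u j else 1))
        - ∫ v, (∑ j ∈ A, (∏ l ∈ A.erase j, (1 - v l))
            * C (fun l => if l = j then v j else 1)) ∂μ)
      = ∫ u, ((∏ l ∈ A, (1 - u l))
          - ∫ v, (∑ j ∈ A, (∏ l ∈ A.erase j, (1 - v l))
              * (if u j ≤ v j then (1:ℝ) else 0)) ∂μ) ∂μ := by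
  have hC' : ∀ u, C u = μ.real (Iic u) := hC
  have hcube : ∀ᵐ v ∂μ, v ∈ Icc 0 1 := by
    rw [ae_mem_iff_measure_eq measurableSet_Icc.nullMeasurableSet, measure_univ, ← hsupp]
    congr 1 with v
    simp [Pi.le_def, forall_and]
  have hweights : ∀ j ∈ A, Integrable (fun v => ∏ l ∈ A.erase j, (1 - v l)) μ :=
    fun j _ => integrable_prod_one_sub hcube _
  have hfirst : ∫ u in univ.pi fun _ => Icc 0 1, C (fun j => if j ∈ A then u j else 1)
      = ∫ v, ∏ l ∈ A, (1 - v l) ∂μ := by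
    rw [pi_univ_Icc]
    simp only [hC']
    exact setIntegral_Icc_measureReal_Iic_piecewise hcube A
  have hsecond :
      ∫ v, ∑ j ∈ A, (∏ l ∈ A.erase j, (1 - v l)) * C (fun l => if l = j then v j else 1) ∂μ
        = ∫ u, ∫ v, ∑ j ∈ A, (∏ l ∈ A.erase j, (1 - v l))
            * (if u j ≤ v j then (1 : ℝ) else 0) ∂μ ∂μ := by
    simp only [hC', measureReal_Iic_ite_eq (hcube.mono fun _ hv => hv.2)]
    exact integral_sum_mul_measureReal_le_eq_integral_integral A hweights
  rw [hfirst, hsecond]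
  exact (integral_sub (integrable_prod_one_sub hcube A)
    (integrable_sum_mul_ite_le A hweights).integral_prod_right).symm

/-- The identity `ψ_{μ,A}(C) = ∫ I_{μ,A}(u) dμ(u)` relating the map `ψ_{μ,A}`
applied to the c.d.f. `C` of `μ` and the integral of the influence-type function
`I_{μ,A}` against `μ`. -/
theorem psi_of_cdf_eq_integral_I
    {d : ℕ} (hd : 1 ≤ d)
    (μ : Measure (Fin d → ℝ)) [IsProbabilityMeasure μ]
    (hsupp : μ {v | ∀ j, v j ∈ Set.Icc (0:ℝ) 1} = 1)
    (C : (Fin d → ℝ) → ℝ)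
    (hC : ∀ u, C u = (μ {v | ∀ j, v j ≤ u j}).toReal)
    (A : Finset (Fin d)) (hA : A.Nonempty) :
    ((∫ u in Set.univ.pi (fun _ : Fin d => Set.Icc (0:ℝ) 1),
          C (fun j => if j ∈ A then u j else 1))
        - ∫ v, (∑ j ∈ A, (∏ l ∈ A.erase j, (1 - v l))
            * C (fun l => if l = j then v j else 1)) ∂μ)
      = ∫ u, ((∏ l ∈ A, (1 - u l))
          - ∫ v, (∑ j ∈ A, (∏ l ∈ A.erase j, (1 - v l))
              * (if u j ≤ v j then (1:ℝ) else 0)) ∂μ) ∂μ :=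
  psi_of_cdf_eq_integral_I_general μ hsupp C hC A
end

section
/- Let b > 0, u ∈ [0,1], and set u₊ = min(u+b, 1), u₋ = max(u−b, 0), and L_b(u,v) = (min(u₊,v) − min(u₋,v))/(u₊ − u₋) for v ∈ [0,1]. Then for every v ∈ (0,1), |L_b(u,v) − 1(u ≤ v)| ≤ 1(u − b ≤ v) − 1(u + b ≤ v). -/
/-!
`L_b(u, ·)` is the piecewise-linear ramp rising from `0` at `u₋`
to `1` at `u₊`, so it takes values in `[0, 1]`. Below `u - b` both `L_b(u, v)` and `1(u ≤ v)`
vanish, from `u + b` on both equal `1`, and in between the right-hand side is `1`.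
-/

section Ramp

variable {K : Type*} [Field K] [LinearOrder K]

/-- The piecewise-linear function of `v` that is `0` up to `a`, `1` from `c` on (when `a < c`). -/
def ramp (a c v : K) : K := (min c v - min a v) / (c - a)

theorem ramp_comm (a c v : K) : ramp a c v = ramp c a v := by
  rw [ramp, ramp, ← neg_div_neg_eq, neg_sub, neg_sub]

theorem ramp_mem_Icc [IsStrictOrderedRing K] (a c v : K) : ramp a c v ∈ Set.Icc 0 1 := by
  wlog hac : a ≤ c generalizing a c
  · rw [ramp_comm]
    exact this c a (le_of_not_ge hac)
  have hmono : min a v ≤ min c v := min_le_min_right v hac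
  have hlip : min c v - min a v ≤ c - a := by
    rcases le_total v a with hva | hav
    · rw [min_eq_right hva, min_eq_right (hva.trans hac)]
      linarith
    · rw [min_eq_left hav]
      linarith [min_le_left c v]
  exact ⟨div_nonneg (sub_nonneg.mpr hmono) (sub_nonneg.mpr hac),
    div_le_one_of_le₀ hlip (sub_nonneg.mpr hac)⟩

theorem ramp_eq_zero {a c v : K} (ha : v ≤ a) (hc : v ≤ c) : ramp a c v = 0 := by
  rw [ramp, min_eq_right ha, min_eq_right hc, sub_self, zero_div]

theorem ramp_eq_one {a c v : K} (hac : a ≠ c) (ha : a ≤ v) (hc : c ≤ v) : ramp a c v = 1 := by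
  rw [ramp, min_eq_left ha, min_eq_left hc, div_self (sub_ne_zero.mpr hac.symm)]

end Ramp

/-- Pointwise bound on the difference between the linear smoother `L_b(u,·)`
and the indicator `1(u ≤ ·)`: for `v ∈ (0,1)`,
`|L_b(u,v) - 1(u ≤ v)| ≤ 1(u - b ≤ v) - 1(u + b ≤ v)`. -/
theorem abs_smoother_sub_indicator_le
    (b u : ℝ) (hb : 0 < b) (hu : u ∈ Set.Icc (0:ℝ) 1) :
    ∀ v ∈ Set.Ioo (0:ℝ) 1,
      |(min (min (u + b) 1) v - min (max (u - b) 0) v)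
            / (min (u + b) 1 - max (u - b) 0)
          - (if u ≤ v then (1:ℝ) else 0)|
        ≤ (if u - b ≤ v then (1:ℝ) else 0) - (if u + b ≤ v then (1:ℝ) else 0) := by
  rintro v ⟨hv0, hv1⟩
  obtain ⟨hu0, hu1⟩ := hu
  change |ramp (max (u - b) 0) (min (u + b) 1) v - _| ≤ _
  by_cases hlow : v < u - b
  · rw [ramp_eq_zero (le_max_of_le_left hlow.le) (le_min (by linarith) hv1.le),
      if_neg (by linarith), if_neg hlow.not_ge, if_neg (by linarith)]
    norm_num
  by_cases hhigh : u + b ≤ v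
  · have hne : max (u - b) 0 ≠ min (u + b) 1 :=
      (max_lt (lt_min (by linarith) (by linarith)) (lt_min (by linarith) one_pos)).ne
    rw [ramp_eq_one hne (max_le (by linarith) hv0.le) (min_le_of_left_le hhigh),
      if_pos (by linarith), if_pos (by linarith), if_pos hhigh]
    norm_num
  rw [if_pos (not_lt.mp hlow), if_neg hhigh, sub_zero]
  obtain ⟨hr0, hr1⟩ := ramp_mem_Icc (max (u - b) 0) (min (u + b) 1) v
  apply abs_sub_le_of_nonneg_of_le hr0 hr1 <;> split_ifs <;> norm_num
end

section
/- Let b > 0 and u ∈ [0,1], with u₊ = min(u+b, 1), u₋ = max(u−b, 0), and L_b(u,v) = (min(u₊,v) − min(u₋,v))/(u₊ − u₋). Then ∫_0^1 |L_b(u,v) − 1(u ≤ v)| dv ≤ 2b, where the integral is with respect to Lebesgue measure on [0,1]. -/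
open MeasureTheory Set

/-!
The ramp `v ↦ (min c v - min a v) / (c - a)` takes values in `[0, 1]` and agrees with the step
`1(u ≤ v)` outside `[a, c]` whenever `u ∈ [a, c]`. Their distance is therefore dominated by the
indicator of `[a, c]`, whose integral is at most `c - a`; with `a = u₋`, `c = u₊` this is `≤ 2b`.
-/

section Ramp

variable {a c u : ℝ}

lemma min_sub_min_div_mem_Icc (hac : a < c) (v : ℝ) :
    (min c v - min a v) / (c - a) ∈ Icc (0 : ℝ) 1 := by
  have hpos : 0 < c - a := sub_pos.2 hac
  refine ⟨div_nonneg (sub_nonneg.2 (min_le_min_right v hac.le)) hpos.le,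
    (div_le_one hpos).2 ?_⟩
  rcases le_total v a with hva | hav
  · rw [min_eq_right (hva.trans hac.le), min_eq_right hva, sub_self]
    exact hpos.le
  · rw [min_eq_left hav]
    linarith [min_le_left c v]

lemma abs_min_sub_min_div_sub_ite_le_indicator (hac : a < c) (hau : a ≤ u) (huc : u ≤ c)
    (v : ℝ) :
    |(min c v - min a v) / (c - a) - (if u ≤ v then (1 : ℝ) else 0)|
      ≤ (Icc a c).indicator 1 v := by
  by_cases hv : v ∈ Icc a c
  · obtain ⟨h0, h1⟩ := min_sub_min_div_mem_Icc hac v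
    rw [indicator_of_mem hv, Pi.one_apply, abs_le]
    split_ifs <;> constructor <;> linarith
  · rw [indicator_of_notMem hv]
    rcases not_and_or.1 hv with hva | hcv
    · have hvu : ¬ u ≤ v := by linarith [not_le.1 hva]
      rw [min_eq_right (by linarith [not_le.1 hva]), min_eq_right (not_le.1 hva).le,
        if_neg hvu]
      simp
    · have huv : u ≤ v := by linarith [not_le.1 hcv]
      rw [min_eq_left (not_le.1 hcv).le, min_eq_left (by linarith [not_le.1 hcv]), if_pos huv,
        div_self (sub_pos.2 hac).ne']
      simp

lemma integral_abs_min_sub_min_div_sub_ite_le {μ : Measure ℝ} (hμ : μ (Icc a c) ≠ ⊤)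
    (hac : a < c) (hau : a ≤ u) (huc : u ≤ c) :
    ∫ v, |(min c v - min a v) / (c - a) - (if u ≤ v then (1 : ℝ) else 0)| ∂μ
      ≤ μ.real (Icc a c) := by
  rw [← integral_indicator_one measurableSet_Icc]
  exact integral_mono_of_nonneg (ae_of_all _ fun _ => abs_nonneg _)
    ((integrableOn_const hμ).integrable_indicator measurableSet_Icc)
    (ae_of_all _ (abs_min_sub_min_div_sub_ite_le_indicator hac hau huc))

end Ramp

/-- The `L¹([0,1])`-distance between the linear smoother `L_b(u,·)` and the
indicator `1(u ≤ ·)` is at most `2b`. -/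
theorem integral_abs_smoother_sub_indicator_le
    (b u : ℝ) (hb : 0 < b) (hu : u ∈ Set.Icc (0:ℝ) 1) :
    (∫ v in Set.Icc (0:ℝ) 1,
        |(min (min (u + b) 1) v - min (max (u - b) 0) v)
              / (min (u + b) 1 - max (u - b) 0)
            - (if u ≤ v then (1:ℝ) else 0)|)
      ≤ 2 * b := by
  obtain ⟨hu0, hu1⟩ := hu
  have hau : max (u - b) 0 ≤ u := max_le (by linarith) hu0
  have huc : u ≤ min (u + b) 1 := le_min (by linarith) hu1
  have hac : max (u - b) 0 < min (u + b) 1 := by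
    apply max_lt <;> apply lt_min <;> linarith
  calc _ ≤ (volume.restrict (Icc (0 : ℝ) 1)).real (Icc (max (u - b) 0) (min (u + b) 1)) :=
        integral_abs_min_sub_min_div_sub_ite_le (by finiteness) hac hau huc
    _ ≤ volume.real (Icc (max (u - b) 0) (min (u + b) 1)) := by
        rw [measureReal_restrict_apply measurableSet_Icc]
        exact measureReal_mono inter_subset_left measure_Icc_lt_top.ne
    _ = min (u + b) 1 - max (u - b) 0 := Real.volume_real_Icc_of_le hac.le
    _ ≤ 2 * b := by linarith [min_le_left (u + b) 1, le_max_left (u - b) 0]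
end

section
/- Let x_1,…,x_n ∈ [0,1] and define the empirical distribution function F(u) = n^{−1} Σ_{i=1}^n 1(x_i ≤ u) for u ∈ [0,1], and its generalized inverse F^{−1}(u) = inf{v ∈ [0,1] : F(v) ≥ u} for u ∈ [0,1]. Then sup_{u∈[0,1]} |F^{−1}(u) − u| = sup_{u∈[0,1]} |F(u) − u|. -/
/-!
The quantile function and `F` are linked by the Galois connection `F⁻¹ u ≤ v ↔ u ≤ F v`
(for `u, v ∈ [0,1]`; the direction `→` is where right-continuity of `F` enters). Through it,
each one-sided bound `F v ≤ v + d`, resp. `v - d ≤ F v`, on `[0,1]` is equivalent to the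
bound `u - d ≤ F⁻¹ u`, resp. `F⁻¹ u ≤ u + d`, so both suprema have the same upper bounds.
-/

open Set Filter Topology

lemma iSup_eq_iSup_of_forall_le_iff {ι : Sort*} {f g : ι → ℝ} (hf : ∀ i, 0 ≤ f i)
    (hg : ∀ i, 0 ≤ g i) (hfb : BddAbove (range f)) (hgb : BddAbove (range g))
    (h : ∀ d, 0 ≤ d → ((∀ i, f i ≤ d) ↔ ∀ i, g i ≤ d)) :
    ⨆ i, f i = ⨆ i, g i :=
  le_antisymm
    (Real.iSup_le ((h _ (Real.iSup_nonneg hg)).2 (le_ciSup hgb)) (Real.iSup_nonneg hg))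
    (Real.iSup_le ((h _ (Real.iSup_nonneg hf)).1 (le_ciSup hfb)) (Real.iSup_nonneg hf))

lemma bddAbove_range_abs_sub {G : ℝ → ℝ} (hG : MapsTo G (Icc 0 1) (Icc 0 1)) :
    BddAbove (range fun u : Icc (0 : ℝ) 1 => |G u - u|) :=
  ⟨1, by rintro _ ⟨u, rfl⟩; exact Real.dist_le_of_mem_Icc_01 (hG u.2) u.2⟩

section Quantile

variable {F : ℝ → ℝ} {u v d : ℝ}

noncomputable def quantile (F : ℝ → ℝ) (u : ℝ) : ℝ :=
  sInf {v ∈ Icc (0 : ℝ) 1 | u ≤ F v}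

lemma isGLB_quantile (hu : u ≤ F 1) :
    IsGLB {v ∈ Icc (0 : ℝ) 1 | u ≤ F v} (quantile F u) :=
  isGLB_csInf ⟨1, ⟨zero_le_one, le_rfl⟩, hu⟩ ⟨0, fun _ hv => hv.1.1⟩

lemma quantile_mem_Icc (hu : u ≤ F 1) : quantile F u ∈ Icc 0 1 :=
  ⟨(isGLB_quantile hu).2 fun _ hv => hv.1.1, (isGLB_quantile hu).1 ⟨⟨zero_le_one, le_rfl⟩, hu⟩⟩

lemma quantile_le (hv : v ∈ Icc 0 1) (h : u ≤ F v) : quantile F u ≤ v :=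
  csInf_le ⟨0, fun _ hw => hw.1.1⟩ ⟨hv, h⟩

lemma le_apply_quantile (hu : u ≤ F 1)
    (hF : ContinuousWithinAt F (Ici (quantile F u)) (quantile F u)) :
    u ≤ F (quantile F u) := by
  have hglb := isGLB_quantile hu
  have := hglb.nhdsWithin_neBot ⟨1, ⟨zero_le_one, le_rfl⟩, hu⟩
  exact ge_of_tendsto (hF.mono fun _ hv => hglb.1 hv).tendsto
    (eventually_nhdsWithin_of_forall fun _ hv => hv.2)

variable (hmono : Monotone F) (hcont : ∀ x, ContinuousWithinAt F (Ici x) x)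
include hmono hcont

lemma quantile_le_iff (hu : u ≤ F 1) (hv : v ∈ Icc 0 1) : quantile F u ≤ v ↔ u ≤ F v :=
  ⟨fun h => (le_apply_quantile hu (hcont _)).trans (hmono h), quantile_le hv⟩

variable (hF0 : 0 ≤ F 0) (hF1 : F 1 = 1)
include hF0 hF1

omit hcont in
lemma apply_mem_Icc (hv : v ∈ Icc 0 1) : F v ∈ Icc 0 1 :=
  ⟨hF0.trans (hmono hv.1), (hmono hv.2).trans hF1.le⟩

lemma forall_quantile_le_add_iff (hd : 0 ≤ d) :
    (∀ u ∈ Icc 0 1, quantile F u ≤ u + d) ↔ ∀ v ∈ Icc 0 1, v - d ≤ F v := by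
  constructor
  · intro h v hv
    rcases lt_or_ge v d with hvd | hdv
    · linarith [(apply_mem_Icc hmono hF0 hF1 hv).1]
    have hu : v - d ∈ Icc 0 1 := ⟨by linarith, by linarith [hv.2]⟩
    exact (quantile_le_iff hmono hcont (hu.2.trans hF1.ge) hv).1
      (by simpa only [sub_add_cancel] using h _ hu)
  · intro h u hu
    rcases le_or_gt (u + d) 1 with hud | hud
    · have hv : u + d ∈ Icc 0 1 := ⟨by linarith [hu.1], hud⟩
      exact quantile_le hv (by simpa only [add_sub_cancel_right] using h _ hv)
    · linarith [(quantile_mem_Icc (F := F) (hu.2.trans hF1.ge)).2]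

lemma forall_sub_le_quantile_iff :
    (∀ u ∈ Icc 0 1, u - d ≤ quantile F u) ↔ ∀ v ∈ Icc 0 1, F v ≤ v + d := by
  constructor
  · intro h v hv
    linarith [h _ (apply_mem_Icc hmono hF0 hF1 hv), quantile_le (u := F v) hv le_rfl]
  · intro h u hu
    have hc := quantile_mem_Icc (F := F) (hu.2.trans hF1.ge)
    linarith [le_apply_quantile (hu.2.trans hF1.ge) (hcont _), h _ hc]

lemma forall_abs_quantile_sub_le_iff (hd : 0 ≤ d) :
    (∀ u ∈ Icc 0 1, |quantile F u - u| ≤ d) ↔ ∀ v ∈ Icc 0 1, |F v - v| ≤ d := by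
  have key := and_congr (forall_quantile_le_add_iff hmono hcont hF0 hF1 hd)
    (forall_sub_le_quantile_iff (d := d) hmono hcont hF0 hF1)
  simp only [sub_le_iff_le_add] at key
  simp only [abs_sub_le_iff, forall₂_and, sub_le_iff_le_add']
  exact key.trans and_comm

theorem iSup_abs_quantile_sub_eq :
    ⨆ u : Icc (0 : ℝ) 1, |quantile F u - u| = ⨆ u : Icc (0 : ℝ) 1, |F u - u| := by
  refine iSup_eq_iSup_of_forall_le_iff (fun _ => abs_nonneg _) (fun _ => abs_nonneg _)
    (bddAbove_range_abs_sub fun _ hu => quantile_mem_Icc (hu.2.trans hF1.ge))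
    (bddAbove_range_abs_sub fun _ => apply_mem_Icc hmono hF0 hF1) fun d hd => ?_
  simpa only [Subtype.forall] using forall_abs_quantile_sub_le_iff hmono hcont hF0 hF1 hd

end Quantile

section EmpiricalCDF

lemma monotone_ite_le (a : ℝ) : Monotone fun u : ℝ => if a ≤ u then (1 : ℝ) else 0 := by
  intro u v huv
  by_cases hau : a ≤ u
  · simp [hau, hau.trans huv]
  · simp only [if_neg hau]
    split_ifs <;> norm_num

variable {n : ℕ} (x : Fin n → ℝ)

noncomputable def empiricalCDF (u : ℝ) : ℝ :=
  (n : ℝ)⁻¹ * ∑ i, if x i ≤ u then 1 else 0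

lemma monotone_empiricalCDF : Monotone (empiricalCDF x) :=
  (Monotone.finsetSum fun i _ => monotone_ite_le (x i)).const_mul (by positivity)

lemma empiricalCDF_nonneg (u : ℝ) : 0 ≤ empiricalCDF x u :=
  mul_nonneg (by positivity) (Finset.sum_nonneg fun _ _ => by split_ifs <;> norm_num)

lemma empiricalCDF_of_forall_le (hn : n ≠ 0) {u : ℝ} (hx : ∀ i, x i ≤ u) :
    empiricalCDF x u = 1 := by
  simp [empiricalCDF, hx, hn]

lemma continuousWithinAt_Ici_ite_le (a c : ℝ) :
    ContinuousWithinAt (fun u : ℝ => if a ≤ u then (1 : ℝ) else 0) (Ici c) c := by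
  by_cases hac : a ≤ c
  · refine (continuousWithinAt_const (b := (1 : ℝ))).congr_of_eventuallyEq ?_ (if_pos hac)
    filter_upwards [self_mem_nhdsWithin] with u hu using if_pos (hac.trans hu)
  · refine (continuousWithinAt_const (b := (0 : ℝ))).congr_of_eventuallyEq ?_ (if_neg hac)
    filter_upwards [nhdsWithin_le_nhds (Iio_mem_nhds (not_le.1 hac))] with u hu
    exact if_neg (not_le.2 hu)

lemma continuousWithinAt_empiricalCDF (c : ℝ) :
    ContinuousWithinAt (empiricalCDF x) (Ici c) c :=
  continuousWithinAt_const.mul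
    (tendsto_finsetSum _ fun i _ => continuousWithinAt_Ici_ite_le (x i) c)

end EmpiricalCDF

/-- For the empirical c.d.f. `F` of points in `[0,1]` and its generalized
(quantile) inverse `F⁻¹`, the uniform distances to the identity coincide:
`sup_{u∈[0,1]} |F⁻¹(u) - u| = sup_{u∈[0,1]} |F(u) - u|`. -/
theorem sup_abs_quantile_eq_sup_abs_ecdf
    {n : ℕ} (hn : 1 ≤ n) (x : Fin n → ℝ) (hx : ∀ i, x i ∈ Set.Icc (0:ℝ) 1)
    (F : ℝ → ℝ)
    (hF : ∀ u, F u = (n : ℝ)⁻¹ * ∑ i, (if x i ≤ u then (1:ℝ) else 0))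
    (Finv : ℝ → ℝ)
    (hFinv : ∀ u, Finv u = sInf {v ∈ Set.Icc (0:ℝ) 1 | u ≤ F v}) :
    (⨆ u : Set.Icc (0:ℝ) 1, |Finv u - (u:ℝ)|)
      = ⨆ u : Set.Icc (0:ℝ) 1, |F u - (u:ℝ)| := by
  obtain rfl : F = empiricalCDF x := funext hF
  obtain rfl : Finv = quantile (empiricalCDF x) := funext hFinv
  exact iSup_abs_quantile_sub_eq (monotone_empiricalCDF x) (continuousWithinAt_empiricalCDF x)
    (empiricalCDF_nonneg x 0) (empiricalCDF_of_forall_le x (Nat.one_le_iff_ne_zero.1 hn) fun i => (hx i).2)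
end

section
/- Let μ be a probability measure on [0,1]^d whose pushforward under each coordinate projection v ↦ v_l is the uniform (Lebesgue) distribution on [0,1], let A ⊆ {1,…,d} be nonempty and j ∈ A. Define G(t) = ∫_{[0,1]^d} ∏_{l∈A\{j}} (1 − v_l)·1(t ≤ v_j) dμ(v) for t ∈ [0,1]. Then G is Lipschitz continuous with constant 1 (in particular continuous) and strictly decreasing on [0,1]. -/
/-!
`G s - G t` is the integral of the weight `∏ (1 - v l)` over the slab `{s ≤ v j < t}`. Uniform
margins put every coordinate in `[0, 1)` almost surely, so the weight lies in `(0, 1]` almost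
surely, and they give the slab mass `t - s`. Hence `0 < G s - G t ≤ t - s` whenever
`0 ≤ s < t ≤ 1`.
-/

open MeasureTheory Set

section UniformCoordinate

variable {Ω : Type*} [MeasurableSpace Ω] {μ : Measure Ω} {X w : Ω → ℝ}

theorem measure_preimage_Ico_of_map_eq_uniform (hX : Measurable X)
    (hlaw : μ.map X = volume.restrict (Icc 0 1)) {s t : ℝ} (hs : 0 ≤ s) (ht : t ≤ 1) :
    μ (X ⁻¹' Ico s t) = ENNReal.ofReal (t - s) := by
  rw [← Measure.map_apply hX measurableSet_Ico, hlaw, Measure.restrict_apply measurableSet_Ico,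
    inter_eq_left.mpr (Ico_subset_Icc_self.trans (Icc_subset_Icc hs ht)), Real.volume_Ico]

theorem ae_mem_Ico_of_map_eq_uniform (hX : Measurable X)
    (hlaw : μ.map X = volume.restrict (Icc 0 1)) : ∀ᵐ ω ∂μ, X ω ∈ Ico (0 : ℝ) 1 := by
  have hnull : μ (X ⁻¹' (Ico 0 1)ᶜ) = 0 := by
    rw [← Measure.map_apply hX measurableSet_Ico.compl, hlaw,
      Measure.restrict_apply measurableSet_Ico.compl, inter_comm, ← sdiff_eq,
      Icc_sdiff_Ico_same zero_le_one, measure_singleton]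
  exact measure_eq_zero_iff_ae_notMem.mp hnull |>.mono fun ω h => not_not.mp h

theorem integral_mul_ite_le_eq_setIntegral (hX : Measurable X) (t : ℝ) :
    ∫ ω, w ω * (if t ≤ X ω then 1 else 0) ∂μ = ∫ ω in X ⁻¹' Ici t, w ω ∂μ := by
  rw [← integral_indicator (hX measurableSet_Ici)]
  congr 1 with ω
  simp only [mul_ite, mul_one, mul_zero, indicator, mem_preimage, mem_Ici]

theorem setIntegral_preimage_Ici_sub (hX : Measurable X) (hw : Integrable w μ) {s t : ℝ}
    (hst : s ≤ t) :
    ∫ ω in X ⁻¹' Ici s, w ω ∂μ - ∫ ω in X ⁻¹' Ici t, w ω ∂μ = ∫ ω in X ⁻¹' Ico s t, w ω ∂μ := by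
  rw [← setIntegral_sdiff (hX measurableSet_Ici) hw.integrableOn
    (preimage_mono (Ici_subset_Ici.mpr hst)), ← preimage_sdiff, Ici_sdiff_Ici]

theorem setIntegral_le_measureReal (hw : Integrable w μ) (hw1 : ∀ᵐ ω ∂μ, w ω ≤ 1)
    {S : Set Ω} (hS : μ S ≠ ⊤) : ∫ ω in S, w ω ∂μ ≤ μ.real S := by
  calc ∫ ω in S, w ω ∂μ ≤ ∫ _ in S, (1 : ℝ) ∂μ :=
        setIntegral_mono_ae hw.integrableOn (integrableOn_const hS) hw1
    _ = μ.real S := by rw [setIntegral_const, smul_eq_mul, mul_one]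

theorem setIntegral_pos_of_ae_pos (hw : Integrable w μ) (hw0 : ∀ᵐ ω ∂μ, 0 < w ω)
    {S : Set Ω} (hS : μ S ≠ 0) : 0 < ∫ ω in S, w ω ∂μ := by
  have hsupp : μ (Function.support w)ᶜ = 0 :=
    measure_eq_zero_iff_ae_notMem.mpr (hw0.mono fun ω h hω => hω h.ne')
  rw [setIntegral_pos_iff_support_of_nonneg_ae (ae_restrict_of_ae (hw0.mono fun _ h => h.le))
    hw.integrableOn, inter_comm, measure_inter_conull hsupp]
  exact pos_iff_ne_zero.mpr hS

theorem sub_setIntegral_preimage_Ici_mem_Ioc (hX : Measurable X)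
    (hlaw : μ.map X = volume.restrict (Icc 0 1)) (hw : Integrable w μ)
    (hw01 : ∀ᵐ ω ∂μ, w ω ∈ Ioc 0 1) {s t : ℝ} (hs : 0 ≤ s) (hst : s < t) (ht : t ≤ 1) :
    ∫ ω in X ⁻¹' Ici s, w ω ∂μ - ∫ ω in X ⁻¹' Ici t, w ω ∂μ ∈ Ioc 0 (t - s) := by
  have hS := measure_preimage_Ico_of_map_eq_uniform hX hlaw hs ht
  rw [setIntegral_preimage_Ici_sub hX hw hst.le]
  refine ⟨setIntegral_pos_of_ae_pos hw (hw01.mono fun _ h => h.1) ?_, ?_⟩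
  · simpa [hS] using hst
  · calc ∫ ω in X ⁻¹' Ico s t, w ω ∂μ ≤ μ.real (X ⁻¹' Ico s t) :=
          setIntegral_le_measureReal hw (hw01.mono fun _ h => h.2) (by simp [hS])
      _ = t - s := by rw [measureReal_def, hS, ENNReal.toReal_ofReal (sub_nonneg.mpr hst.le)]

theorem lipschitzOnWith_one_and_strictAntiOn_setIntegral_preimage_Ici (hX : Measurable X)
    (hlaw : μ.map X = volume.restrict (Icc 0 1)) (hw : Integrable w μ)
    (hw01 : ∀ᵐ ω ∂μ, w ω ∈ Ioc 0 1) :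
    LipschitzOnWith 1 (fun t => ∫ ω in X ⁻¹' Ici t, w ω ∂μ) (Icc 0 1) ∧
      StrictAntiOn (fun t => ∫ ω in X ⁻¹' Ici t, w ω ∂μ) (Icc 0 1) := by
  have hdrop {s t : ℝ} (hs : s ∈ Icc (0 : ℝ) 1) (ht : t ∈ Icc (0 : ℝ) 1) (hst : s < t) :=
    sub_setIntegral_preimage_Ici_mem_Ioc hX hlaw hw hw01 hs.1 hst ht.2
  refine ⟨LipschitzOnWith.of_le_add fun x hx y hy => ?_,
    fun s hs t ht hst => sub_pos.mp (hdrop hs ht hst).1⟩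
  rcases lt_trichotomy x y with hxy | rfl | hxy
  · have := (hdrop hx hy hxy).2
    rw [Real.dist_eq, abs_sub_comm, abs_of_pos (sub_pos.mpr hxy)]
    linarith
  · simp
  · have := (hdrop hy hx hxy).1
    linarith [dist_nonneg (x := x) (y := y)]

end UniformCoordinate

theorem ae_prod_one_sub_mem_Ioc {d : ℕ} {μ : Measure (Fin d → ℝ)}
    (hmarg : ∀ l : Fin d, μ.map (fun v => v l) = volume.restrict (Icc (0:ℝ) 1))
    (B : Finset (Fin d)) : ∀ᵐ v ∂μ, ∏ l ∈ B, (1 - v l) ∈ Ioc 0 1 := by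
  filter_upwards [ae_all_iff.mpr fun l => ae_mem_Ico_of_map_eq_uniform (measurable_pi_apply l)
    (hmarg l)] with v hv
  exact ⟨Finset.prod_pos fun l _ => sub_pos.mpr (hv l).2,
    Finset.prod_le_one (fun l _ => sub_nonneg.mpr (hv l).2.le)
      fun l _ => sub_le_self 1 (hv l).1⟩

theorem centering_function_lipschitz_strictAnti_general
    {d : ℕ} (μ : Measure (Fin d → ℝ)) [IsProbabilityMeasure μ]
    (hmarg : ∀ l : Fin d, μ.map (fun v => v l) = volume.restrict (Set.Icc (0:ℝ) 1))
    (A : Finset (Fin d)) (j : Fin d)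
    (G : ℝ → ℝ)
    (hG : ∀ t, G t = ∫ v, (∏ l ∈ A.erase j, (1 - v l))
        * (if t ≤ v j then (1:ℝ) else 0) ∂μ) :
    LipschitzOnWith 1 G (Set.Icc (0:ℝ) 1) ∧ StrictAntiOn G (Set.Icc (0:ℝ) 1) := by
  have hX : Measurable fun v : Fin d → ℝ => v j := measurable_pi_apply j
  have hw01 := ae_prod_one_sub_mem_Ioc hmarg (A.erase j)
  have hwm : Measurable fun v : Fin d → ℝ => ∏ l ∈ A.erase j, (1 - v l) :=
    Finset.measurable_prod _ fun l _ => measurable_const.sub (measurable_pi_apply l)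
  have hw : Integrable (fun v : Fin d → ℝ => ∏ l ∈ A.erase j, (1 - v l)) μ :=
    .of_bound hwm.aestronglyMeasurable 1
      (hw01.mono fun v h => (Real.norm_of_nonneg h.1.le).trans_le h.2)
  obtain rfl : G = fun t => ∫ v in (fun v => v j) ⁻¹' Ici t, ∏ l ∈ A.erase j, (1 - v l) ∂μ :=
    funext fun t => (hG t).trans (integral_mul_ite_le_eq_setIntegral hX t)
  exact lipschitzOnWith_one_and_strictAntiOn_setIntegral_preimage_Ici hX (hmarg j) hw hw01

/-- For a copula measure `μ` (uniform margins), the centering function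
`G(t) = ∫ ∏_{l∈A\{j}}(1-v_l)·1(t ≤ v_j) dμ(v)` is `1`-Lipschitz (hence
continuous) and strictly decreasing on `[0,1]`. -/
theorem centering_function_lipschitz_strictAnti
    {d : ℕ} (μ : Measure (Fin d → ℝ)) [IsProbabilityMeasure μ]
    (hmarg : ∀ l : Fin d, μ.map (fun v => v l) = volume.restrict (Set.Icc (0:ℝ) 1))
    (A : Finset (Fin d)) (hA : A.Nonempty) (j : Fin d) (hj : j ∈ A)
    (G : ℝ → ℝ)
    (hG : ∀ t, G t = ∫ v, (∏ l ∈ A.erase j, (1 - v l))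
        * (if t ≤ v j then (1:ℝ) else 0) ∂μ) :
    LipschitzOnWith 1 G (Set.Icc (0:ℝ) 1) ∧ StrictAntiOn G (Set.Icc (0:ℝ) 1) :=
  centering_function_lipschitz_strictAnti_general μ hmarg A j G hG
end

section
/- Let d ≥ 1 and let X_1, X_2, … be i.i.d. random vectors with values in ℝ^d whose marginal cumulative distribution functions F_1,…,F_d are continuous, defined on a probability space (Ω, F, P). For each n and i,j, let R_{ij} = Σ_{t=1}^n 1(X_{tj} ≤ X_{ij}) and Û_i = (R_{i1}/n,…,R_{id}/n) ∈ [0,1]^d. For a nonempty A ⊆ {1,…,d} define the empirical quantity Î_{n,A}(u) = ∏_{l∈A}(1−u_l) − n^{−1} Σ_{t=1}^n Σ_{j∈A} ∏_{l∈A\{j}} (1 − Û_{tl})·1(u_j ≤ Û_{tj}), let Î_n(u) be the vector (Î_{n,A}(u))_{A nonempty} in ℝ^{2^d−1}, and let f : ℝ^{2^d−1} → ℝ be a linear map. Define the estimator σ̂²_n = n^{−1} Σ_{i=1}^n [ f( Î_n(Û_i) − n^{−1} Σ_{t=1}^n Î_n(Û_t) ) ]². Let U_1 = (F_1(X_{11}),…,F_d(X_{1d})),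 let μ be the law of U_1, and let I_{μ,A}(u) = ∏_{l∈A}(1−u_l) − ∫ Σ_{j∈A} ∏_{l∈A\{j}}(1−v_l)·1(u_j ≤ v_j) dμ(v), with I_μ(u) the vector (I_{μ,A}(u))_{A nonempty}. Then σ̂²_n converges in probability, as n → ∞, to the variance Var(f(I_μ(U_1))). -/
/-!
Write `U_t = (F_1(X_{t1}), …, F_d(X_{td}))`. By the probability integral transform the margins of
`μ`, the law of `U_t`, are uniform on `[0, 1]`; in particular almost surely no two `U_t` tie in
any coordinate, and then the ranks of the `X_t` are those of the `U_t`. Ranks compare exactly as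
the sample points do, so `Î_{n,A}(Û_i)` differs from `I_{μ,A}(U_i)` only through `Û_i - U_i` and
through the empirical means `s ↦ n⁻¹ ∑_t ∏_{l ∈ A ∖ {j}} (1 - U_{tl}) 1(s ≤ U_{tj})`. Both are
monotone in `s` and converge at every rational `s` by the strong law, to limits that are
continuous because the margins are uniform; by Pólya's theorem they converge uniformly on `[0, 1]`.
Hence `f(Î_n(Û_i))` approximates `f(I_μ(U_i))` uniformly in `i < n`, so the two sample variances
have the same limit, which by the strong law is `Var f(I_μ(U_1))`. Almost sure convergence gives
convergence in probability.
-/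

open MeasureTheory ProbabilityTheory Filter Topology Finset Set

noncomputable def sampleMean (n : ℕ) (a : ℕ → ℝ) : ℝ := (n : ℝ)⁻¹ * ∑ t ∈ range n, a t

noncomputable def sampleVariance (n : ℕ) (a : ℕ → ℝ) : ℝ :=
  sampleMean n fun i => (a i - sampleMean n a) ^ 2

section SampleMean

variable {n : ℕ} {a b : ℕ → ℝ}

lemma sampleMean_sub (n : ℕ) (a b : ℕ → ℝ) :
    sampleMean n (fun t => a t - b t) = sampleMean n a - sampleMean n b := by
  simp only [sampleMean, sum_sub_distrib, mul_sub]

lemma sampleMean_sum {β : Type*} (n : ℕ) (A : Finset β) (a : β → ℕ → ℝ) :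
    sampleMean n (fun t => ∑ j ∈ A, a j t) = ∑ j ∈ A, sampleMean n (a j) := by
  simp only [sampleMean, mul_sum]; rw [sum_comm]

lemma sampleMean_mono (h : ∀ t < n, a t ≤ b t) : sampleMean n a ≤ sampleMean n b :=
  mul_le_mul_of_nonneg_left (sum_le_sum fun t ht => h t (mem_range.1 ht)) (by positivity)

lemma sampleMean_nonneg (h : ∀ t < n, 0 ≤ a t) : 0 ≤ sampleMean n a := by
  simpa [sampleMean] using sampleMean_mono (a := 0) h

lemma sampleMean_le {c : ℝ} (hc : 0 ≤ c) (h : ∀ t < n, a t ≤ c) : sampleMean n a ≤ c := by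
  rcases n.eq_zero_or_pos with rfl | hn
  · simpa [sampleMean] using hc
  calc sampleMean n a ≤ sampleMean n fun _ => c := sampleMean_mono h
    _ = c := by simp [sampleMean, field]

lemma abs_sampleMean_le {c : ℝ} (hc : 0 ≤ c) (h : ∀ t < n, |a t| ≤ c) : |sampleMean n a| ≤ c := by
  rw [sampleMean, abs_mul, abs_inv, Nat.abs_cast]
  calc (n : ℝ)⁻¹ * |∑ t ∈ range n, a t| ≤ sampleMean n fun t => |a t| := by
        unfold sampleMean; gcongr; exact abs_sum_le_sum_abs _ _
    _ ≤ c := sampleMean_le hc h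

lemma sampleVariance_eq_sub (n : ℕ) (a : ℕ → ℝ) :
    sampleVariance n a = sampleMean n (fun i => a i ^ 2) - sampleMean n a ^ 2 := by
  rcases n.eq_zero_or_pos with rfl | hn
  · simp [sampleVariance, sampleMean]
  simp only [sampleVariance, sampleMean, sub_sq, sum_add_distrib, sum_sub_distrib, ← sum_mul,
    ← mul_sum, sum_const, card_range, nsmul_eq_mul]
  field_simp
  ring

end SampleMean

def TendstoUniformlyOnPrefixes {E : Type*} [PseudoMetricSpace E] (z : ℕ → ℕ → E) (y : ℕ → E) :
    Prop :=
  ∀ δ > 0, ∀ᶠ n in atTop, ∀ i < n, dist (z n i) (y i) ≤ δ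

namespace TendstoUniformlyOnPrefixes

variable {E F : Type*} [PseudoMetricSpace E] [PseudoMetricSpace F]

lemma comp_lipschitzWith {z : ℕ → ℕ → E} {y : ℕ → E} {g : E → F} {K : NNReal}
    (h : TendstoUniformlyOnPrefixes z y) (hg : LipschitzWith K g) :
    TendstoUniformlyOnPrefixes (fun n i => g (z n i)) (fun i => g (y i)) := by
  intro δ hδ
  filter_upwards [h (δ / (K + 1)) (by positivity)] with n hn i hi
  calc dist (g (z n i)) (g (y i)) ≤ K * dist (z n i) (y i) := hg.dist_le_mul _ _
    _ ≤ (K + 1) * (δ / (K + 1)) := by gcongr; exacts [by linarith, hn i hi]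
    _ = δ := by field_simp

lemma pi {β : Type*} [Fintype β] {z : ℕ → ℕ → β → ℝ} {y : ℕ → β → ℝ}
    (h : ∀ b, TendstoUniformlyOnPrefixes (fun n i => z n i b) (fun i => y i b)) :
    TendstoUniformlyOnPrefixes z y := by
  intro δ hδ
  filter_upwards [eventually_all.2 fun b => h b δ hδ] with n hn i hi
  exact (dist_pi_le_iff hδ.le).2 fun b => hn b i hi

lemma sq {z : ℕ → ℕ → ℝ} {y : ℕ → ℝ} {B : ℝ} (h : TendstoUniformlyOnPrefixes z y)
    (hB : ∀ i, |y i| ≤ B) :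
    TendstoUniformlyOnPrefixes (fun n i => z n i ^ 2) (fun i => y i ^ 2) := by
  have hB0 : 0 ≤ B := (abs_nonneg _).trans (hB 0)
  intro δ hδ
  filter_upwards [h (min 1 (δ / (2 * B + 1))) (by positivity)] with n hn i hi
  have hzy : |z n i - y i| ≤ min 1 (δ / (2 * B + 1)) := hn i hi
  have hsum : |z n i + y i| ≤ 2 * B + 1 := by
    calc |z n i + y i| = |(z n i - y i) + 2 * y i| := by ring_nf
      _ ≤ |z n i - y i| + 2 * |y i| := by
          simpa [abs_mul] using abs_add_le (z n i - y i) (2 * y i)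
      _ ≤ 1 + 2 * B := by gcongr; exacts [hzy.trans (min_le_left _ _), hB i]
      _ = 2 * B + 1 := by ring
  calc dist (z n i ^ 2) (y i ^ 2) = |z n i - y i| * |z n i + y i| := by
        rw [Real.dist_eq, ← abs_mul]; ring_nf
    _ ≤ δ / (2 * B + 1) * (2 * B + 1) := by
        gcongr; exact hzy.trans (min_le_right _ _)
    _ = δ := by field_simp

lemma tendsto_sampleMean {z : ℕ → ℕ → ℝ} {y : ℕ → ℝ} {m : ℝ} (h : TendstoUniformlyOnPrefixes z y)
    (hy : Tendsto (fun n => sampleMean n y) atTop (𝓝 m)) :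
    Tendsto (fun n => sampleMean n (z n)) atTop (𝓝 m) := by
  have hdiff : Tendsto (fun n => sampleMean n (z n) - sampleMean n y) atTop (𝓝 0) := by
    refine Metric.tendsto_nhds.2 fun δ hδ => ?_
    filter_upwards [h (δ / 2) (by positivity)] with n hn
    rw [Real.dist_0_eq_abs, ← sampleMean_sub]
    exact (abs_sampleMean_le (by positivity) hn).trans_lt (by linarith)
  simpa using hdiff.add hy

end TendstoUniformlyOnPrefixes

lemma tendsto_sampleVariance {z : ℕ → ℕ → ℝ} {y : ℕ → ℝ} {B m m₂ : ℝ}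
    (h : TendstoUniformlyOnPrefixes z y) (hB : ∀ i, |y i| ≤ B)
    (hm : Tendsto (fun n => sampleMean n y) atTop (𝓝 m))
    (hm₂ : Tendsto (fun n => sampleMean n fun i => y i ^ 2) atTop (𝓝 m₂)) :
    Tendsto (fun n => sampleVariance n (z n)) atTop (𝓝 (m₂ - m ^ 2)) := by
  simp only [sampleVariance_eq_sub]
  exact ((h.sq hB).tendsto_sampleMean hm₂).sub ((h.tendsto_sampleMean hm).pow 2)

lemma eventually_abs_sub_le_of_tendstoUniformlyOn {F : ℕ → ℝ → ℝ} {f : ℝ → ℝ} {s : Set ℝ}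
    (h : TendstoUniformlyOn F f atTop s) {ε : ℝ} (hε : 0 < ε) :
    ∀ᶠ n in atTop, ∀ x ∈ s, |F n x - f x| ≤ ε := by
  filter_upwards [Metric.tendstoUniformlyOn_iff.1 h ε hε] with n hn x hx
  rw [← Real.dist_eq, dist_comm]; exact (hn x hx).le

lemma exists_grid_bracket {M : ℕ} (hM : 0 < M) {s : ℝ} (hs : s ∈ Icc (0 : ℝ) 1) :
    ∃ a b : ℕ, a ≤ M ∧ b ≤ M ∧ (a / M : ℝ) ≤ s ∧ s ≤ (b / M : ℝ) ∧ (b / M : ℝ) - a / M ≤ 1 / M := by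
  have hM' : (0 : ℝ) < M := by exact_mod_cast hM
  have hsM : 0 ≤ s * M := by have := hs.1; positivity
  refine ⟨⌊s * M⌋₊, ⌈s * M⌉₊, ?_, ?_, ?_, ?_, ?_⟩
  · exact Nat.floor_le_of_le (by nlinarith [hs.2])
  · exact Nat.ceil_le.2 (by nlinarith [hs.2])
  · rw [div_le_iff₀ hM']; exact Nat.floor_le hsM
  · rw [le_div_iff₀ hM']; exact Nat.le_ceil _
  · rw [← sub_div]; gcongr
    have := Nat.ceil_le_floor_add_one (s * M)
    rw [sub_le_iff_le_add']; exact_mod_cast this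

/-- Pólya's theorem. -/
theorem tendstoUniformlyOn_Icc_of_monotone {K : ℕ → ℝ → ℝ} {k : ℝ → ℝ}
    (hK : ∀ n, Monotone (K n)) (hk : ContinuousOn k (Icc 0 1))
    (h : ∀ q : ℚ, (q : ℝ) ∈ Icc (0 : ℝ) 1 → Tendsto (fun n => K n q) atTop (𝓝 (k q))) :
    TendstoUniformlyOn K k atTop (Icc 0 1) := by
  rw [Metric.tendstoUniformlyOn_iff]
  intro ε hε
  obtain ⟨η, hη, hkη⟩ := Metric.uniformContinuousOn_iff.1
    (isCompact_Icc.uniformContinuousOn_of_continuous hk) (ε / 2) (by positivity)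
  obtain ⟨m, hm⟩ := exists_nat_one_div_lt hη
  set M := m + 1
  have hM : (0 : ℝ) < M := by positivity
  have hMη : 1 / (M : ℝ) < η := by simpa [M] using hm
  have hgrid (r : ℕ) (hr : r ≤ M) : (r / M : ℝ) ∈ Icc (0 : ℝ) 1 :=
    ⟨by positivity, div_le_one_of_le₀ (by exact_mod_cast hr) hM.le⟩
  have hconv : ∀ᶠ n in atTop, ∀ r ∈ range (M + 1), |K n (r / M) - k (r / M)| < ε / 2 := by
    refine (eventually_all_finset _).2 fun r hr => ?_
    have hr : r ≤ M := Nat.lt_succ_iff.1 (mem_range.1 hr)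
    have := h (r / M) (by push_cast; exact hgrid r hr)
    push_cast at this
    exact (Metric.tendsto_nhds.1 this _ (by positivity)).mono fun n hn => hn
  filter_upwards [hconv] with n hn s hs
  obtain ⟨a, b, ha, hb, has, hsb, hab⟩ := exists_grid_bracket (Nat.succ_pos m : 0 < M) hs
  have hka : |k s - k (a / M)| < ε / 2 := by
    refine hkη s hs _ (hgrid a ha) ?_
    rw [Real.dist_eq, abs_of_nonneg (by linarith)]; linarith
  have hkb : |k (b / M) - k s| < ε / 2 := by
    refine hkη _ (hgrid b hb) s hs ?_
    rw [Real.dist_eq, abs_of_nonneg (by linarith)]; linarith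
  have hKa := abs_lt.1 (hn a (mem_range.2 (Nat.lt_succ_of_le ha)))
  have hKb := abs_lt.1 (hn b (mem_range.2 (Nat.lt_succ_of_le hb)))
  have hmono_a := hK n has
  have hmono_b := hK n hsb
  rw [Real.dist_eq, abs_lt]
  constructor <;> linarith [(abs_lt.1 hka).1, (abs_lt.1 hka).2, (abs_lt.1 hkb).1, (abs_lt.1 hkb).2]

lemma abs_prod_sub_prod_le {ι : Type*} (s : Finset ι) {a b : ι → ℝ}
    (ha : ∀ i ∈ s, |a i| ≤ 1) (hb : ∀ i ∈ s, |b i| ≤ 1) :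
    |∏ i ∈ s, a i - ∏ i ∈ s, b i| ≤ ∑ i ∈ s, |a i - b i| := by
  classical
  induction s using Finset.cons_induction with
  | empty => simp
  | cons j s hj ih =>
    simp only [forall_mem_cons] at ha hb
    rw [prod_cons, prod_cons, sum_cons]
    have hpa : |∏ i ∈ s, a i| ≤ 1 := by
      rw [abs_prod]; exact prod_le_one (fun _ _ => abs_nonneg _) ha.2
    calc |a j * ∏ i ∈ s, a i - b j * ∏ i ∈ s, b i|
        = |(a j - b j) * ∏ i ∈ s, a i + b j * (∏ i ∈ s, a i - ∏ i ∈ s, b i)| := by ring_nf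
      _ ≤ |a j - b j| * 1 + 1 * ∑ i ∈ s, |a i - b i| := by
          refine (abs_add_le _ _).trans ?_
          rw [abs_mul, abs_mul]
          gcongr
          exacts [hb.1, ih ha.2 hb.2]
      _ = _ := by ring

lemma toReal_measure_le_eq_cdf {Ω : Type*} [MeasurableSpace Ω] (P : Measure Ω)
    [IsProbabilityMeasure P] {Y : Ω → ℝ} (hY : Measurable Y) (x : ℝ) :
    (P {ω | Y ω ≤ x}).toReal = cdf (P.map Y) x := by
  have := Measure.isProbabilityMeasure_map (μ := P) hY.aemeasurable
  rw [cdf_eq_real, measureReal_def, Measure.map_apply hY measurableSet_Iic]; rfl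

lemma measure_cdf_le {ν : Measure ℝ} [IsProbabilityMeasure ν] (hc : Continuous (cdf ν)) (s : ℝ) :
    ν {x | cdf ν x ≤ s} = ENNReal.ofReal (min s 1) := by
  rcases le_or_gt 1 s with hs | hs
  · rw [min_eq_right hs, ENNReal.ofReal_one, ← measure_univ (μ := ν)]
    congr 1
    exact eq_univ_of_forall fun x => (cdf_le_one ν x).trans hs
  rw [min_eq_left hs.le]
  set S := {x | cdf ν x ≤ s}
  have hbdd : BddAbove S := by
    obtain ⟨a, ha⟩ := ((tendsto_cdf_atTop ν).eventually_const_lt hs).exists_forall_of_atTop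
    exact ⟨a, fun x hx => not_lt.1 fun hax => (ha x hax.le).not_ge hx⟩
  rcases S.eq_empty_or_nonempty with hS | hS
  · have hs0 : s ≤ 0 := ge_of_tendsto (tendsto_cdf_atBot ν) (Eventually.of_forall fun x =>
      (not_le.1 fun hx => (hS ▸ hx : x ∈ (∅ : Set ℝ))).le)
    rw [hS, measure_empty, ENNReal.ofReal_of_nonpos hs0]
  -- `S` is a closed lower set, hence `Iic (sSup S)`, and `cdf ν` equals `s` at `sSup S`
  set b := sSup S
  have hb : b ∈ S := (isClosed_le hc continuous_const).csSup_mem hS hbdd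
  have hSb : S = Iic b := Subset.antisymm (fun x hx => le_csSup hbdd hx)
    fun x hx => (monotone_cdf ν hx).trans hb
  have hcdf : cdf ν b = s := by
    refine le_antisymm hb (ge_of_tendsto
      ((hc.tendsto b).mono_left (nhdsWithin_le_nhds (s := Ioi b)))
      (eventually_nhdsWithin_of_forall fun x (hx : b < x) => ?_))
    exact (not_le.1 fun h => hx.not_ge (le_csSup hbdd h)).le
  rw [hSb, ← ofReal_cdf, hcdf]

/-- Probability integral transform. -/
theorem map_cdf_eq_volume_restrict {ν : Measure ℝ} [IsProbabilityMeasure ν]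
    (hc : Continuous (cdf ν)) : ν.map (cdf ν) = volume.restrict (Icc 0 1) := by
  have : IsProbabilityMeasure (ν.map (cdf ν)) :=
    Measure.isProbabilityMeasure_map hc.measurable.aemeasurable
  refine Measure.ext_of_Iic _ _ fun s => ?_
  have hI : Iic s ∩ Icc 0 1 = Icc 0 (min s 1) := by
    ext x; simp only [mem_inter_iff, Set.mem_Iic, Set.mem_Icc, le_min_iff]; tauto
  rw [Measure.map_apply hc.measurable measurableSet_Iic, Measure.restrict_apply measurableSet_Iic,
    hI, Real.volume_Icc, sub_zero]
  exact measure_cdf_le hc s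

section

variable {ι : Type*}

lemma prod_one_sub_mem_Icc (B : Finset ι) {v : ι → ℝ} (hv : ∀ l, v l ∈ Icc (0 : ℝ) 1) :
    ∏ l ∈ B, (1 - v l) ∈ Icc (0 : ℝ) 1 :=
  ⟨prod_nonneg fun l _ => sub_nonneg.2 (hv l).2,
    prod_le_one (fun l _ => sub_nonneg.2 (hv l).2) fun l _ => sub_le_self _ (hv l).1⟩

@[fun_prop]
lemma Measurable.ite_le_one_zero {α : Type*} [MeasurableSpace α] {f g : α → ℝ} (hf : Measurable f)
    (hg : Measurable g) : Measurable fun x => if f x ≤ g x then (1 : ℝ) else 0 :=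
  Measurable.ite (measurableSet_le hf hg) measurable_const measurable_const

noncomputable def empiricalCdf (u : ℕ → ι → ℝ) (n : ℕ) (j : ι) (s : ℝ) : ℝ :=
  sampleMean n fun t => if u t j ≤ s then 1 else 0

noncomputable def pseudoObs (u : ℕ → ι → ℝ) (n i : ℕ) (j : ι) : ℝ := empiricalCdf u n j (u i j)

lemma empiricalCdf_mono (u : ℕ → ι → ℝ) (n : ℕ) (j : ι) : Monotone (empiricalCdf u n j) :=
  fun _ _ hst => sampleMean_mono fun t _ => by split_ifs <;> linarith

lemma empiricalCdf_mem_Icc (u : ℕ → ι → ℝ) (n : ℕ) (j : ι) (s : ℝ) :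
    empiricalCdf u n j s ∈ Icc (0 : ℝ) 1 :=
  ⟨sampleMean_nonneg fun t _ => by split_ifs <;> norm_num,
    sampleMean_le zero_le_one fun t _ => by split_ifs <;> norm_num⟩

lemma pseudoObs_le_pseudoObs_iff (u : ℕ → ι → ℝ) {n i : ℕ} (hi : i < n) (t : ℕ) (j : ι) :
    pseudoObs u n i j ≤ pseudoObs u n t j ↔ u i j ≤ u t j := by
  refine ⟨fun h => ?_, fun h => empiricalCdf_mono u n j h⟩
  by_contra! hlt
  have hn : (0 : ℝ) < n := by exact_mod_cast (Nat.zero_le i).trans_lt hi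
  refine h.not_gt (mul_lt_mul_of_pos_left ?_ (inv_pos.2 hn))
  refine sum_lt_sum (fun s _ => ?_) ⟨i, mem_range.2 hi, by simp [not_le.2 hlt]⟩
  split_ifs <;> linarith

lemma pseudoObs_map_monotone {x : ℕ → ι → ℝ} {G : ι → ℝ → ℝ} (hG : ∀ j, Monotone (G j))
    (hties : ∀ t i, t ≠ i → ∀ j, G j (x t j) ≠ G j (x i j)) (n : ℕ) :
    pseudoObs (fun t j => G j (x t j)) n = pseudoObs x n := by
  funext i j
  refine congrArg (sampleMean n) (funext fun t => if_congr ⟨fun h => ?_, fun h => hG j h⟩ rfl rfl)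
  by_contra! hlt
  rcases eq_or_ne t i with rfl | hti
  · exact lt_irrefl _ hlt
  · exact hties t i hti j (le_antisymm h (hG j hlt.le))

lemma abs_prod_one_sub_pseudoObs_sub_le {u : ℕ → ι → ℝ} (hu : ∀ t l, u t l ∈ Icc (0 : ℝ) 1)
    {n : ℕ} {ε : ℝ} (hL : ∀ l, ∀ s ∈ Icc (0 : ℝ) 1, |empiricalCdf u n l s - s| ≤ ε)
    (B : Finset ι) (t : ℕ) :
    |∏ l ∈ B, (1 - pseudoObs u n t l) - ∏ l ∈ B, (1 - u t l)| ≤ #B * ε := by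
  have hunit {x : ℝ} (hx : x ∈ Icc (0 : ℝ) 1) : |1 - x| ≤ 1 := by
    rw [abs_le]; constructor <;> linarith [hx.1, hx.2]
  calc _ ≤ ∑ l ∈ B, |(1 - pseudoObs u n t l) - (1 - u t l)| :=
        abs_prod_sub_prod_le B (fun l _ => hunit (empiricalCdf_mem_Icc ..))
          (fun l _ => hunit (hu t l))
    _ ≤ ∑ _l ∈ B, ε := sum_le_sum fun l _ => by
        rw [sub_sub_sub_cancel_left, abs_sub_comm]; exact hL l _ (hu t l)
    _ = #B * ε := by rw [sum_const, nsmul_eq_mul]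

section prodIndicator

variable [DecidableEq ι]

noncomputable def prodIndicator (A : Finset ι) (j : ι) (s : ℝ) (v : ι → ℝ) : ℝ :=
  (∏ l ∈ A.erase j, (1 - v l)) * if s ≤ v j then 1 else 0

/-- The paper's `Î_{n,A}(Û_i)`, for an array `û` of pseudo-observations. -/
noncomputable def empiricalI (û : ℕ → ι → ℝ) (n i : ℕ) (A : Finset ι) : ℝ :=
  ∏ l ∈ A, (1 - û i l) - sampleMean n fun t => ∑ j ∈ A, prodIndicator A j (û i j) (û t)

/-- The paper's `I_{μ,A}(v)`. -/
noncomputable def limitI (μ : Measure (ι → ℝ)) (v : ι → ℝ) (A : Finset ι) : ℝ :=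
  ∏ l ∈ A, (1 - v l) - ∑ j ∈ A, ∫ w, prodIndicator A j (v j) w ∂μ

variable (A : Finset ι) (j : ι)

lemma measurable_prodIndicator (s : ℝ) : Measurable (prodIndicator A j s) := by
  unfold prodIndicator; fun_prop

lemma prodIndicator_mem_Icc (s : ℝ) {v : ι → ℝ} (hv : ∀ l, v l ∈ Icc (0 : ℝ) 1) :
    prodIndicator A j s v ∈ Icc (0 : ℝ) 1 := by
  have := prod_one_sub_mem_Icc (A.erase j) hv
  constructor <;> unfold prodIndicator <;> split_ifs <;> simp [this.1, this.2]

lemma antitone_prodIndicator {v : ι → ℝ} (hv : ∀ l, v l ∈ Icc (0 : ℝ) 1) :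
    Antitone fun s => prodIndicator A j s v := fun s t hst => by
  refine mul_le_mul_of_nonneg_left ?_ (prod_one_sub_mem_Icc _ hv).1
  split_ifs <;> linarith

lemma prodIndicator_sub_prodIndicator_le {s t : ℝ} (hst : s ≤ t) {v : ι → ℝ}
    (hv : ∀ l, v l ∈ Icc (0 : ℝ) 1) :
    prodIndicator A j s v - prodIndicator A j t v ≤ (Ico s t).indicator 1 (v j) := by
  have := prod_one_sub_mem_Icc (A.erase j) hv
  unfold prodIndicator
  by_cases hs : s ≤ v j <;> by_cases ht : t ≤ v j
  · simp [hs, ht, Set.indicator_of_notMem, not_lt.2 ht]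
  · simpa [hs, ht, Set.indicator_of_mem, not_le.1 ht] using this.2
  · exact absurd (hst.trans ht) hs
  · simp [hs, ht, Set.indicator_of_notMem]

end prodIndicator

lemma measurable_sampleVariance_empiricalI [DecidableEq ι] {Ω : Type*} [MeasurableSpace Ω]
    {X : ℕ → Ω → ι → ℝ} (hX : ∀ t, Measurable (X t)) {g : (Finset ι → ℝ) → ℝ}
    (hg : Measurable g) (n : ℕ) :
    Measurable fun ω =>
      sampleVariance n fun i => g (empiricalI (pseudoObs (fun t => X t ω) n) n i) := by
  unfold sampleVariance empiricalI pseudoObs empiricalCdf prodIndicator sampleMean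
  fun_prop

/-- By `pseudoObs_le_pseudoObs_iff` the indicators in `Î_{n,A}(Û_i)` are those of the sample
itself, so only the products and the kernel means `κ` carry an error. -/
lemma abs_empiricalI_sub_le [DecidableEq ι] {u : ℕ → ι → ℝ} (hu : ∀ t l, u t l ∈ Icc (0 : ℝ) 1)
    {n i : ℕ} (hi : i < n) {ε : ℝ} (hε : 0 ≤ ε) {A : Finset ι} {κ : ι → ℝ → ℝ}
    (hL : ∀ l, ∀ s ∈ Icc (0 : ℝ) 1, |empiricalCdf u n l s - s| ≤ ε)
    (hK : ∀ j ∈ A, ∀ s ∈ Icc (0 : ℝ) 1,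
      |sampleMean n (fun t => prodIndicator A j s (u t)) - κ j s| ≤ ε) :
    |empiricalI (pseudoObs u n) n i A - (∏ l ∈ A, (1 - u i l) - ∑ j ∈ A, κ j (u i j))|
      ≤ (#A + #A * (#A + 1)) * ε := by
  have hterm : ∀ j ∈ A, |sampleMean n (fun t => prodIndicator A j (pseudoObs u n i j)
      (pseudoObs u n t)) - κ j (u i j)| ≤ (#A + 1) * ε := by
    intro j hj
    have hswap : |sampleMean n (fun t => prodIndicator A j (pseudoObs u n i j) (pseudoObs u n t))
        - sampleMean n (fun t => prodIndicator A j (u i j) (u t))| ≤ #A * ε := by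
      rw [← sampleMean_sub]
      refine abs_sampleMean_le (by positivity) fun t _ => ?_
      simp only [prodIndicator, pseudoObs_le_pseudoObs_iff u hi, ← sub_mul, abs_mul]
      calc _ ≤ #(A.erase j) * ε * 1 := by
            gcongr
            · exact abs_prod_one_sub_pseudoObs_sub_le hu hL _ t
            · split_ifs <;> norm_num
        _ ≤ #A * ε := by rw [mul_one]; gcongr; exact erase_subset j A
    calc _ ≤ _ + _ := abs_sub_le _ (sampleMean n (fun t => prodIndicator A j (u i j) (u t))) _
      _ ≤ #A * ε + ε := add_le_add hswap (hK j hj _ (hu i j))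
      _ = (#A + 1) * ε := by ring
  rw [empiricalI, sampleMean_sum, sub_sub_sub_comm, ← sum_sub_distrib]
  calc _ ≤ _ + _ := abs_sub _ _
    _ ≤ #A * ε + ∑ _j ∈ A, (#A + 1) * ε := by
        gcongr
        · exact abs_prod_one_sub_pseudoObs_sub_le hu hL A i
        · exact (abs_sum_le_sum_abs _ _).trans (sum_le_sum hterm)
    _ = _ := by rw [sum_const, nsmul_eq_mul]; ring

lemma tendstoUniformlyOnPrefixes_empiricalI [DecidableEq ι] [Finite ι] {u : ℕ → ι → ℝ}
    (hu : ∀ t l, u t l ∈ Icc (0 : ℝ) 1) {A : Finset ι} {κ : ι → ℝ → ℝ}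
    (hL : ∀ l, TendstoUniformlyOn (fun n => empiricalCdf u n l) id atTop (Icc 0 1))
    (hK : ∀ j ∈ A, TendstoUniformlyOn (fun n s => sampleMean n fun t => prodIndicator A j s (u t))
      (κ j) atTop (Icc 0 1)) :
    TendstoUniformlyOnPrefixes (fun n i => empiricalI (pseudoObs u n) n i A)
      (fun i => ∏ l ∈ A, (1 - u i l) - ∑ j ∈ A, κ j (u i j)) := by
  intro δ hδ
  set C : ℝ := #A + #A * (#A + 1)
  have hC : 0 < C + 1 := by positivity
  have hε : 0 < δ / (C + 1) := by positivity
  filter_upwards [eventually_all.2 fun l => eventually_abs_sub_le_of_tendstoUniformlyOn (hL l) hε,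
    (eventually_all_finset A).2 fun j hj =>
      eventually_abs_sub_le_of_tendstoUniformlyOn (hK j hj) hε]
    with n hLn hKn i hi
  calc _ ≤ C * (δ / (C + 1)) := abs_empiricalI_sub_le hu hi hε.le hLn hKn
    _ ≤ (C + 1) * (δ / (C + 1)) := by gcongr; linarith
    _ = δ := by field_simp

def HasUniformMarginals (μ : Measure (ι → ℝ)) : Prop :=
  ∀ j, μ.map (fun v => v j) = volume.restrict (Icc 0 1)

noncomputable def cdfTransform (ν : ι → Measure ℝ) (x : ι → ℝ) : ι → ℝ := fun j => cdf (ν j) (x j)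

lemma measurable_cdfTransform (ν : ι → Measure ℝ) : Measurable (cdfTransform ν) :=
  measurable_pi_lambda _ fun j => (monotone_cdf (ν j)).measurable.comp (measurable_pi_apply j)

lemma cdfTransform_mem_Icc (ν : ι → Measure ℝ) (x : ι → ℝ) (j : ι) :
    cdfTransform ν x j ∈ Icc (0 : ℝ) 1 :=
  ⟨cdf_nonneg _ _, cdf_le_one _ _⟩

theorem hasUniformMarginals_map_cdfTransform {Ω : Type*} [MeasurableSpace Ω] (P : Measure Ω)
    [IsProbabilityMeasure P] {Y : Ω → ι → ℝ} (hY : Measurable Y)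
    (hc : ∀ j, Continuous (cdf (P.map fun ω => Y ω j))) :
    HasUniformMarginals (P.map (cdfTransform (fun j => P.map fun ω => Y ω j) ∘ Y)) := by
  intro j
  have hYj : Measurable fun ω => Y ω j := (measurable_pi_apply j).comp hY
  have : IsProbabilityMeasure (P.map fun ω => Y ω j) :=
    Measure.isProbabilityMeasure_map hYj.aemeasurable
  rw [Measure.map_map (measurable_pi_apply j) ((measurable_cdfTransform _).comp hY),
    ← map_cdf_eq_volume_restrict (hc j), Measure.map_map (monotone_cdf _).measurable hYj]
  rfl

namespace HasUniformMarginals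

variable {μ : Measure (ι → ℝ)}

lemma ae_mem_Icc [Countable ι] (hμ : HasUniformMarginals μ) :
    ∀ᵐ v ∂μ, ∀ l, v l ∈ Icc (0 : ℝ) 1 :=
  ae_all_iff.2 fun l => (ae_map_iff (measurable_pi_apply l).aemeasurable measurableSet_Icc).1
    (hμ l ▸ ae_restrict_mem measurableSet_Icc)

lemma integrable_of_abs_le [Countable ι] [IsFiniteMeasure μ] (hμ : HasUniformMarginals μ)
    {φ : (ι → ℝ) → ℝ} (hφ : Measurable φ) (C : ℝ)
    (hC : ∀ v, (∀ l, v l ∈ Icc (0 : ℝ) 1) → |φ v| ≤ C) : Integrable φ μ :=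
  Integrable.of_bound hφ.aestronglyMeasurable C (hμ.ae_mem_Icc.mono fun v hv => hC v hv)

lemma integral_comp_coord (hμ : HasUniformMarginals μ) (j : ι) {g : ℝ → ℝ} (hg : Measurable g) :
    ∫ v, g (v j) ∂μ = ∫ x in Icc 0 1, g x := by
  rw [← hμ j, integral_map (measurable_pi_apply j).aemeasurable hg.aestronglyMeasurable]

lemma integral_indicator_coord (hμ : HasUniformMarginals μ) (j : ι) {S : Set ℝ}
    (hS : MeasurableSet S) : ∫ v, S.indicator 1 (v j) ∂μ = volume.real (S ∩ Icc 0 1) := by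
  rw [hμ.integral_comp_coord j (measurable_one.indicator hS), integral_indicator_one hS,
    measureReal_restrict_apply hS]

lemma integral_ite_le (hμ : HasUniformMarginals μ) (j : ι) {s : ℝ} (hs : s ∈ Icc (0 : ℝ) 1) :
    ∫ v, (if v j ≤ s then (1 : ℝ) else 0) ∂μ = s := by
  have hI : Iic s ∩ Icc 0 1 = Icc 0 s := by
    ext x; simp only [mem_inter_iff, Set.mem_Iic, Set.mem_Icc]
    constructor
    · rintro ⟨h, h0, -⟩; exact ⟨h0, h⟩
    · rintro ⟨h0, h⟩; exact ⟨h, h0, h.trans hs.2⟩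
  simpa [hI, hs.1, Set.indicator] using hμ.integral_indicator_coord j measurableSet_Iic (S := Iic s)

variable [DecidableEq ι] [Countable ι] [IsFiniteMeasure μ]

lemma integrable_prodIndicator (hμ : HasUniformMarginals μ) (A : Finset ι) (j : ι) (s : ℝ) :
    Integrable (prodIndicator A j s) μ :=
  hμ.integrable_of_abs_le (measurable_prodIndicator A j s) 1 fun _ hv =>
    abs_le.2 ⟨by linarith [(prodIndicator_mem_Icc A j s hv).1], (prodIndicator_mem_Icc A j s hv).2⟩

lemma lipschitzWith_integral_prodIndicator (hμ : HasUniformMarginals μ) (A : Finset ι) (j : ι) :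
    LipschitzWith 1 fun s => ∫ v, prodIndicator A j s v ∂μ := by
  have key {s t : ℝ} (hst : s ≤ t) :
      0 ≤ ∫ v, prodIndicator A j s v ∂μ - ∫ v, prodIndicator A j t v ∂μ
      ∧ ∫ v, prodIndicator A j s v ∂μ - ∫ v, prodIndicator A j t v ∂μ ≤ t - s := by
    rw [← integral_sub (hμ.integrable_prodIndicator A j s) (hμ.integrable_prodIndicator A j t)]
    refine ⟨integral_nonneg_of_ae ?_, ?_⟩
    · filter_upwards [hμ.ae_mem_Icc] with v hv
      exact sub_nonneg.2 (antitone_prodIndicator A j hv hst)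
    have hind : Measurable fun v : ι → ℝ => (Ico s t).indicator (1 : ℝ → ℝ) (v j) :=
      (measurable_one.indicator measurableSet_Ico).comp (measurable_pi_apply j)
    calc _ ≤ ∫ v, (Ico s t).indicator 1 (v j) ∂μ := by
          refine integral_mono_ae ((hμ.integrable_prodIndicator A j s).sub
            (hμ.integrable_prodIndicator A j t)) (hμ.integrable_of_abs_le hind 1 fun v _ => ?_) ?_
          · by_cases h : v j ∈ Ico s t <;> simp [h]
          · filter_upwards [hμ.ae_mem_Icc] with v hv
            exact prodIndicator_sub_prodIndicator_le A j hst hv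
      _ = volume.real (Ico s t ∩ Icc 0 1) := hμ.integral_indicator_coord j measurableSet_Ico
      _ ≤ volume.real (Ico s t) := measureReal_mono inter_subset_left measure_Ico_lt_top.ne
      _ = t - s := by simp [hst]
  refine LipschitzWith.of_dist_le_mul fun s t => ?_
  rw [NNReal.coe_one, one_mul, Real.dist_eq, Real.dist_eq]
  rcases le_total s t with h | h
  · rw [abs_of_nonneg (key h).1, abs_sub_comm, abs_of_nonneg (sub_nonneg.2 h)]; exact (key h).2
  · rw [abs_sub_comm, abs_of_nonneg (key h).1, abs_of_nonneg (sub_nonneg.2 h)]; exact (key h).2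

lemma continuous_limitI (hμ : HasUniformMarginals μ) (A : Finset ι) :
    Continuous fun v => limitI μ v A :=
  (continuous_finsetProd _ fun l _ => continuous_const.sub (continuous_apply l)).sub
    (continuous_finsetSum _ fun j _ =>
      (hμ.lipschitzWith_integral_prodIndicator A j).continuous.comp (continuous_apply j))

end HasUniformMarginals

section IID

variable {Ω : Type*} [MeasurableSpace Ω] {P : Measure Ω}

lemma ProbabilityTheory.IndepFun.measure_eq_eq_zero [IsFiniteMeasure P] {A B : Ω → ℝ}
    (hA : Measurable A) (hB : Measurable B) (h : IndepFun A B P) [NullSingletonClass (P.map B)] :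
    P {ω | A ω = B ω} = 0 := by
  have hdiag : MeasurableSet {p : ℝ × ℝ | p.1 = p.2} :=
    measurableSet_eq_fun measurable_fst measurable_snd
  calc P {ω | A ω = B ω} = P.map (fun ω => (A ω, B ω)) {p | p.1 = p.2} :=
        (Measure.map_apply (hA.prodMk hB) hdiag).symm
    _ = 0 := by
        rw [(indepFun_iff_map_prod_eq_prod_map_map hA.aemeasurable hB.aemeasurable).1 h,
          Measure.prod_apply hdiag]
        simp [Set.preimage, measure_singleton]

lemma ae_tendsto_sampleMean {E : Type*} [MeasurableSpace E] {U : ℕ → Ω → E}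
    (hU : ∀ t, Measurable (U t)) (hind : iIndepFun U P) {μ : Measure E}
    (hlaw : ∀ t, P.map (U t) = μ) {φ : E → ℝ} (hφ : Measurable φ) (hint : Integrable φ μ) :
    ∀ᵐ ω ∂P, Tendsto (fun n => sampleMean n fun t => φ (U t ω)) atTop (𝓝 (∫ x, φ x ∂μ)) := by
  have hslln := strong_law_ae_real (fun t ω => φ (U t ω))
    (by rw [← hlaw 0] at hint; exact hint.comp_measurable (hU 0))
    (fun t s hts => (hind.indepFun hts).comp hφ hφ)
    (fun t => (IdentDistrib.mk (hU t).aemeasurable (hU 0).aemeasurable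
      ((hlaw t).trans (hlaw 0).symm)).comp hφ)
  rw [← hlaw 0, integral_map (hU 0).aemeasurable hφ.aestronglyMeasurable]
  filter_upwards [hslln] with ω hω
  simpa only [sampleMean, div_eq_inv_mul] using hω

lemma tendsto_measure_lt_abs_sub_of_ae_tendsto [IsFiniteMeasure P] {f : ℕ → Ω → ℝ} {c : ℝ}
    (hf : ∀ n, Measurable (f n)) (h : ∀ᵐ ω ∂P, Tendsto (fun n => f n ω) atTop (𝓝 c))
    {ε : ℝ} (hε : 0 < ε) : Tendsto (fun n => P {ω | ε < |f n ω - c|}) atTop (𝓝 0) := by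
  have := tendstoInMeasure_iff_dist.1
    (tendstoInMeasure_of_tendsto_ae (g := fun _ => c) (fun n => (hf n).aestronglyMeasurable) h) ε hε
  refine tendsto_of_tendsto_of_tendsto_of_le_of_le tendsto_const_nhds this (fun _ => bot_le)
    fun n => measure_mono fun ω (hω : ε < |f n ω - c|) => ?_
  exact (show ε ≤ dist (f n ω) c from hω.le)

variable [IsProbabilityMeasure P] {U : ℕ → Ω → ι → ℝ} {μ : Measure (ι → ℝ)}

lemma ae_ne_of_hasUniformMarginals [Countable ι] (hU : ∀ t, Measurable (U t))
    (hind : iIndepFun U P) (hlaw : ∀ t, P.map (U t) = μ) (hμ : HasUniformMarginals μ) :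
    ∀ᵐ ω ∂P, ∀ t i, t ≠ i → ∀ j, U t ω j ≠ U i ω j := by
  refine ae_all_iff.2 fun t => ae_all_iff.2 fun i => ?_
  rcases eq_or_ne t i with rfl | hti
  · exact ae_of_all _ fun ω h => absurd rfl h
  refine (ae_all_iff.2 fun j => ?_).mono fun ω h _ => h
  have hlaw_j : P.map ((fun v : ι → ℝ => v j) ∘ U i) = volume.restrict (Icc 0 1) := by
    rw [← hμ j, ← hlaw i, Measure.map_map (measurable_pi_apply j) (hU i)]
  have : NullSingletonClass (P.map ((fun v : ι → ℝ => v j) ∘ U i)) := hlaw_j ▸ inferInstance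
  have hindj := (hind.indepFun hti).comp (measurable_pi_apply j) (measurable_pi_apply j)
  have := hindj.measure_eq_eq_zero ((measurable_pi_apply j).comp (hU t))
    ((measurable_pi_apply j).comp (hU i))
  exact ae_iff.2 (by simpa using this)

/-- Glivenko–Cantelli. -/
lemma ae_tendstoUniformlyOn_empiricalCdf [Countable ι] (hU : ∀ t, Measurable (U t))
    (hind : iIndepFun U P) (hlaw : ∀ t, P.map (U t) = μ) (hμ : HasUniformMarginals μ) :
    ∀ᵐ ω ∂P, ∀ j, TendstoUniformlyOn (fun n => empiricalCdf (fun t => U t ω) n j) id atTop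
      (Icc 0 1) := by
  have : IsProbabilityMeasure μ := hlaw 0 ▸ Measure.isProbabilityMeasure_map (hU 0).aemeasurable
  refine ae_all_iff.2 fun j => ?_
  have hq := ae_all_iff.2 fun (q : ℚ) => ae_tendsto_sampleMean hU hind hlaw
    (φ := fun v => if v j ≤ (q : ℝ) then (1 : ℝ) else 0) (by fun_prop)
    (hμ.integrable_of_abs_le (by fun_prop) 1 fun v _ => by split_ifs <;> norm_num)
  filter_upwards [hq] with ω hω
  refine tendstoUniformlyOn_Icc_of_monotone (fun n => empiricalCdf_mono _ n j) continuousOn_id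
    fun q hq => ?_
  have h := hω q
  rw [hμ.integral_ite_le j hq] at h
  exact h

lemma ae_tendstoUniformlyOn_sampleMean_prodIndicator [Fintype ι] [DecidableEq ι]
    (hU : ∀ t, Measurable (U t)) (hind : iIndepFun U P) (hlaw : ∀ t, P.map (U t) = μ)
    (hμ : HasUniformMarginals μ) (hcube : ∀ t ω l, U t ω l ∈ Icc (0 : ℝ) 1) :
    ∀ᵐ ω ∂P, ∀ (A : Finset ι) (j : ι),
      TendstoUniformlyOn (fun n s => sampleMean n fun t => prodIndicator A j s (U t ω))
        (fun s => ∫ v, prodIndicator A j s v ∂μ) atTop (Icc 0 1) := by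
  have : IsProbabilityMeasure μ := hlaw 0 ▸ Measure.isProbabilityMeasure_map (hU 0).aemeasurable
  refine ae_all_iff.2 fun A => ae_all_iff.2 fun j => ?_
  have hq := ae_all_iff.2 fun (q : ℚ) => ae_tendsto_sampleMean hU hind hlaw
    (measurable_prodIndicator A j q) (hμ.integrable_prodIndicator A j q)
  filter_upwards [hq] with ω hω
  -- the empirical means are antitone in `s`: apply Pólya to their negatives
  have hneg := tendstoUniformlyOn_Icc_of_monotone
    (K := -fun n s => sampleMean n fun t => prodIndicator A j s (U t ω))
    (k := -fun s => ∫ v, prodIndicator A j s v ∂μ)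
    (fun n s s' h => neg_le_neg (sampleMean_mono fun t _ =>
      antitone_prodIndicator A j (hcube t ω) h))
    (hμ.lipschitzWith_integral_prodIndicator A j).continuous.neg.continuousOn
    fun q _ => (hω q).neg
  simpa only [neg_neg] using hneg.neg

theorem ae_tendsto_sampleVariance [Fintype ι] [DecidableEq ι] (hU : ∀ t, Measurable (U t))
    (hind : iIndepFun U P) (hlaw : ∀ t, P.map (U t) = μ) (hμ : HasUniformMarginals μ)
    (hcube : ∀ t ω l, U t ω l ∈ Icc (0 : ℝ) 1) {g : (Finset ι → ℝ) → ℝ} {K : NNReal}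
    (hg : LipschitzWith K g) :
    ∀ᵐ ω ∂P, Tendsto (fun n => sampleVariance n fun i =>
      g (empiricalI (pseudoObs (fun t => U t ω) n) n i)) atTop
        (𝓝 (variance (fun ω => g (limitI μ (U 0 ω))) P)) := by
  have : IsProbabilityMeasure μ := hlaw 0 ▸ Measure.isProbabilityMeasure_map (hU 0).aemeasurable
  set y : (ι → ℝ) → ℝ := fun v => g (limitI μ v)
  have hy : Continuous y := hg.continuous.comp (continuous_pi hμ.continuous_limitI)
  obtain ⟨B, hB⟩ := (isCompact_Icc (a := (0 : ι → ℝ)) (b := 1)).exists_bound_of_continuousOn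
    hy.continuousOn
  have hBcube (v : ι → ℝ) (hv : ∀ l, v l ∈ Icc (0 : ℝ) 1) : |y v| ≤ B :=
    hB v ⟨fun l => (hv l).1, fun l => (hv l).2⟩
  have hvar : variance (fun ω => y (U 0 ω)) P = ∫ v, y v ^ 2 ∂μ - (∫ v, y v ∂μ) ^ 2 := by
    rw [← Function.comp_def, ← variance_map hy.aemeasurable (hU 0).aemeasurable, hlaw 0,
      variance_eq_sub (MemLp.of_bound hy.aestronglyMeasurable B
        (hμ.ae_mem_Icc.mono fun v hv => hBcube v hv))]
    rfl
  rw [hvar]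
  filter_upwards [ae_tendstoUniformlyOn_empiricalCdf hU hind hlaw hμ,
    ae_tendstoUniformlyOn_sampleMean_prodIndicator hU hind hlaw hμ hcube,
    ae_tendsto_sampleMean hU hind hlaw hy.measurable
      (hμ.integrable_of_abs_le hy.measurable B hBcube),
    ae_tendsto_sampleMean hU hind hlaw (φ := fun v => y v ^ 2) (hy.pow 2).measurable
      (hμ.integrable_of_abs_le (hy.pow 2).measurable (B ^ 2) fun v hv => by
        rw [abs_pow]; exact pow_le_pow_left₀ (abs_nonneg _) (hBcube v hv) 2)]
    with ω hL hK hm hm₂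
  have happrox : TendstoUniformlyOnPrefixes
      (fun n i => empiricalI (pseudoObs (fun t => U t ω) n) n i) (fun i => limitI μ (U i ω)) :=
    TendstoUniformlyOnPrefixes.pi fun A => tendstoUniformlyOnPrefixes_empiricalI
      (κ := fun j s => ∫ v, prodIndicator A j s v ∂μ) (fun t => hcube t ω) hL fun j _ => hK A j
  exact tendsto_sampleVariance (happrox.comp_lipschitzWith hg) (fun i => hBcube _ (hcube i ω))
    hm hm₂

end IID

lemma estimator_eq_sampleVariance {Ω : Type*} [DecidableEq ι] {X : ℕ → Ω → (ι → ℝ)}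
    {Uhat : ℕ → ℕ → Ω → (ι → ℝ)}
    (hUhat : ∀ n i ω j, Uhat n i ω j
      = (n : ℝ)⁻¹ * ∑ t ∈ Finset.range n,
          (if X t ω j ≤ X i ω j then (1:ℝ) else 0))
    {Ihat : ℕ → Ω → (ι → ℝ) → {A : Finset ι // A.Nonempty} → ℝ}
    (hIhat : ∀ n ω u A, Ihat n ω u A
      = (∏ l ∈ A.1, (1 - u l))
        - (n : ℝ)⁻¹ * ∑ t ∈ Finset.range n, ∑ j ∈ A.1,
            (∏ l ∈ A.1.erase j, (1 - Uhat n t ω l))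
              * (if u j ≤ Uhat n t ω j then (1:ℝ) else 0))
    (f : ({A : Finset ι // A.Nonempty} → ℝ) →ₗ[ℝ] ℝ) {σ2 : ℕ → Ω → ℝ}
    (hσ2 : ∀ n ω, σ2 n ω
      = (n : ℝ)⁻¹ * ∑ i ∈ Finset.range n,
          (f (Ihat n ω (Uhat n i ω)
              - (n : ℝ)⁻¹ • ∑ t ∈ Finset.range n, Ihat n ω (Uhat n t ω))) ^ 2)
    (n : ℕ) (ω : Ω) :
    σ2 n ω = sampleVariance n fun i =>
      (f ∘ₗ LinearMap.funLeft ℝ ℝ Subtype.val) (empiricalI (pseudoObs (fun t => X t ω) n) n i) := by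
  have hU : ∀ i, Uhat n i ω = pseudoObs (fun t => X t ω) n i := fun i => funext (hUhat n i ω)
  have hI : ∀ i, Ihat n ω (Uhat n i ω)
      = fun A => empiricalI (pseudoObs (fun t => X t ω) n) n i A.1 := fun i => funext fun A => by
    rw [hIhat]; simp only [hU]; rfl
  simp only [hσ2, hI, map_sub, map_smul, map_sum, smul_eq_mul]
  rfl

end

theorem variance_estimator_consistent_iid_general
    {Ω : Type*} [MeasurableSpace Ω] (P : Measure Ω) [IsProbabilityMeasure P]
    {d : ℕ}
    (X : ℕ → Ω → (Fin d → ℝ)) (hmeas : ∀ i, Measurable (X i))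
    (hindep : iIndepFun X P)
    (hident : ∀ i, P.map (X i) = P.map (X 0))
    (F : Fin d → ℝ → ℝ)
    (hF : ∀ j x, F j x = (P {ω | X 0 ω j ≤ x}).toReal)
    (hFcont : ∀ j, Continuous (F j))
    (Uhat : ℕ → ℕ → Ω → (Fin d → ℝ))
    (hUhat : ∀ n i ω j, Uhat n i ω j
      = (n : ℝ)⁻¹ * ∑ t ∈ Finset.range n,
          (if X t ω j ≤ X i ω j then (1:ℝ) else 0))
    (Ihat : ℕ → Ω → (Fin d → ℝ) → {A : Finset (Fin d) // A.Nonempty} → ℝ)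
    (hIhat : ∀ n ω u A, Ihat n ω u A
      = (∏ l ∈ A.1, (1 - u l))
        - (n : ℝ)⁻¹ * ∑ t ∈ Finset.range n, ∑ j ∈ A.1,
            (∏ l ∈ A.1.erase j, (1 - Uhat n t ω l))
              * (if u j ≤ Uhat n t ω j then (1:ℝ) else 0))
    (f : ({A : Finset (Fin d) // A.Nonempty} → ℝ) →ₗ[ℝ] ℝ)
    (σ2 : ℕ → Ω → ℝ)
    (hσ2 : ∀ n ω, σ2 n ω
      = (n : ℝ)⁻¹ * ∑ i ∈ Finset.range n,
          (f (Ihat n ω (Uhat n i ω)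
              - (n : ℝ)⁻¹ • ∑ t ∈ Finset.range n, Ihat n ω (Uhat n t ω))) ^ 2)
    (μ : Measure (Fin d → ℝ))
    (hμ : μ = P.map (fun ω => fun j => F j (X 0 ω j)))
    (Iμ : (Fin d → ℝ) → {A : Finset (Fin d) // A.Nonempty} → ℝ)
    (hIμ : ∀ u A, Iμ u A
      = (∏ l ∈ A.1, (1 - u l))
        - ∫ w, ∑ j ∈ A.1, (∏ l ∈ A.1.erase j, (1 - w l))
            * (if u j ≤ w j then (1:ℝ) else 0) ∂μ) :
    ∀ ε : ℝ, 0 < ε →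
      Tendsto (fun n => P {ω | ε <
          |σ2 n ω - variance (fun ω => f (Iμ (fun j => F j (X 0 ω j)))) P|})
        atTop (nhds 0) := by
  classical
  set ν : Fin d → Measure ℝ := fun j => P.map fun ω => X 0 ω j
  obtain rfl : F = fun j x => cdf (ν j) x := funext₂ fun j x =>
    (hF j x).trans (toReal_measure_le_eq_cdf P ((measurable_pi_apply j).comp (hmeas 0)) x)
  set U : ℕ → Ω → Fin d → ℝ := fun t => cdfTransform ν ∘ X t
  have hU (t : ℕ) : Measurable (U t) := (measurable_cdfTransform ν).comp (hmeas t)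
  have hind : iIndepFun U P := hindep.comp _ fun _ => measurable_cdfTransform ν
  have hlaw (t : ℕ) : P.map (U t) = μ := by
    rw [hμ, ← Measure.map_map (measurable_cdfTransform ν) (hmeas t), hident t,
      Measure.map_map (measurable_cdfTransform ν) (hmeas 0)]; rfl
  have hmarg : HasUniformMarginals μ := hμ ▸ hasUniformMarginals_map_cdfTransform P (hmeas 0) hFcont
  have : IsProbabilityMeasure μ := hlaw 0 ▸ Measure.isProbabilityMeasure_map (hU 0).aemeasurable
  have hIμ_eq (u : Fin d → ℝ) : Iμ u = fun A => limitI μ u A.1 := funext fun A => by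
    rw [hIμ, limitI, ← integral_finsetSum _ fun j _ => hmarg.integrable_prodIndicator _ j _]; rfl
  set g := f ∘ₗ LinearMap.funLeft ℝ ℝ Subtype.val
  have hσ := estimator_eq_sampleVariance hUhat hIhat f hσ2
  have hae : ∀ᵐ ω ∂P, Tendsto (σ2 · ω) atTop (𝓝 (variance (fun ω => f (Iμ (U 0 ω))) P)) := by
    filter_upwards [ae_tendsto_sampleVariance hU hind hlaw hmarg
      (fun t ω => cdfTransform_mem_Icc ν (X t ω)) (LinearMap.toContinuousLinearMap g).lipschitz,
      ae_ne_of_hasUniformMarginals hU hind hlaw hmarg] with ω h hω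
    simp only [hσ, hIμ_eq, ← pseudoObs_map_monotone (fun j => monotone_cdf (ν j)) hω]
    exact h
  refine fun ε hε => tendsto_measure_lt_abs_sub_of_ae_tendsto (fun n => ?_) hae hε
  rw [funext (hσ n)]
  exact measurable_sampleVariance_empiricalI hmeas g.continuous_of_finiteDimensional.measurable n

/-- Consistency of the variance estimator in the serially independent case:
for i.i.d. observations with continuous margins, the rank-based estimator
`σ̂²_n` converges in probability to `Var(f(I_μ(U_1)))`, where `μ` is the law of
the vector of probability integral transforms. -/
theorem variance_estimator_consistent_iid
    {Ω : Type*} [MeasurableSpace Ω] (P : Measure Ω) [IsProbabilityMeasure P]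
    {d : ℕ} (hd : 1 ≤ d)
    (X : ℕ → Ω → (Fin d → ℝ)) (hmeas : ∀ i, Measurable (X i))
    (hindep : iIndepFun X P)
    (hident : ∀ i, P.map (X i) = P.map (X 0))
    (F : Fin d → ℝ → ℝ)
    (hF : ∀ j x, F j x = (P {ω | X 0 ω j ≤ x}).toReal)
    (hFcont : ∀ j, Continuous (F j))
    (Uhat : ℕ → ℕ → Ω → (Fin d → ℝ))
    (hUhat : ∀ n i ω j, Uhat n i ω j
      = (n : ℝ)⁻¹ * ∑ t ∈ Finset.range n,
          (if X t ω j ≤ X i ω j then (1:ℝ) else 0))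
    (Ihat : ℕ → Ω → (Fin d → ℝ) → {A : Finset (Fin d) // A.Nonempty} → ℝ)
    (hIhat : ∀ n ω u A, Ihat n ω u A
      = (∏ l ∈ A.1, (1 - u l))
        - (n : ℝ)⁻¹ * ∑ t ∈ Finset.range n, ∑ j ∈ A.1,
            (∏ l ∈ A.1.erase j, (1 - Uhat n t ω l))
              * (if u j ≤ Uhat n t ω j then (1:ℝ) else 0))
    (f : ({A : Finset (Fin d) // A.Nonempty} → ℝ) →ₗ[ℝ] ℝ)
    (σ2 : ℕ → Ω → ℝ)
    (hσ2 : ∀ n ω, σ2 n ω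
      = (n : ℝ)⁻¹ * ∑ i ∈ Finset.range n,
          (f (Ihat n ω (Uhat n i ω)
              - (n : ℝ)⁻¹ • ∑ t ∈ Finset.range n, Ihat n ω (Uhat n t ω))) ^ 2)
    (μ : Measure (Fin d → ℝ))
    (hμ : μ = P.map (fun ω => fun j => F j (X 0 ω j)))
    (Iμ : (Fin d → ℝ) → {A : Finset (Fin d) // A.Nonempty} → ℝ)
    (hIμ : ∀ u A, Iμ u A
      = (∏ l ∈ A.1, (1 - u l))
        - ∫ w, ∑ j ∈ A.1, (∏ l ∈ A.1.erase j, (1 - w l))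
            * (if u j ≤ w j then (1:ℝ) else 0) ∂μ) :
    ∀ ε : ℝ, 0 < ε →
      Tendsto (fun n => P {ω | ε <
          |σ2 n ω - variance (fun ω => f (Iμ (fun j => F j (X 0 ω j)))) P|})
        atTop (nhds 0) :=
  variance_estimator_consistent_iid_general P X hmeas hindep hident F hF hFcont Uhat hUhat Ihat
    hIhat f σ2 hσ2 μ hμ Iμ hIμ
end
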